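/- arXiv:2404.06250 — 6 statements merged into one kernel-verified Lean document; each statement's English description precedes it below -/
import Mathlib

section
/- Let μ = ∑_{k∈ℕ} 2k²π² δ_{k²π²} be the measure on (0,∞) with atoms at k²π² of mass 2k²π², and set S_n = (2^{n-1}, 2^n]. Then the sequence {2^{-3n/2} μ(S_n)}_{n∈ℕ} does not converge to 0 as n → ∞; in particular it is not in ℓ²(ℕ). -/
open Real Filter

lemma key_lb (n : ℕ) (hn : 10 ≤ n) (μSn : ℝ)
    (hμ : μSn = 2 * π ^ 2 *
      ∑' k : ℕ, if (2:ℝ) ^ ((n:ℝ) - 1) < ((k:ℝ)+1) ^ 2 * π ^ 2 ∧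
          ((k:ℝ)+1) ^ 2 * π ^ 2 ≤ (2:ℝ) ^ (n:ℝ) then ((k:ℝ)+1) ^ 2 else 0) :
    1/32 ≤ (2:ℝ) ^ (-(3 * (n:ℝ)) / 2) * μSn := by
  have hπ : (0:ℝ) < π := Real.pi_pos
  set sA : ℝ := (2:ℝ) ^ (((n:ℝ)-1)/2) with hsA
  set sB : ℝ := (2:ℝ) ^ ((n:ℝ)/2) with hsB
  have hsApos : 0 < sA := Real.rpow_pos_of_pos (by norm_num) _
  have hsBpos : 0 < sB := Real.rpow_pos_of_pos (by norm_num) _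
  have hsA2 : sA ^ 2 = (2:ℝ) ^ ((n:ℝ) - 1) := by
    rw [hsA, ← Real.rpow_natCast ((2:ℝ) ^ (((n:ℝ)-1)/2)) 2,
      ← Real.rpow_mul (by norm_num)]
    norm_num
  have hsB2 : sB ^ 2 = (2:ℝ) ^ ((n:ℝ)) := by
    rw [hsB, ← Real.rpow_natCast ((2:ℝ) ^ (((n:ℝ))/2)) 2,
      ← Real.rpow_mul (by norm_num)]
    norm_num
  set a : ℝ := sA / π with hadef
  set b : ℝ := sB / π with hbdef
  have ha : 0 < a := div_pos hsApos hπ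
  have hb : 0 < b := div_pos hsBpos hπ
  have hab : a ≤ b := by
    rw [hadef, hbdef]
    gcongr
    exact Real.rpow_le_rpow_of_exponent_le (by norm_num) (by linarith)
  -- condition equivalence
  have hcond : ∀ k : ℕ,
      ((2:ℝ) ^ ((n:ℝ) - 1) < ((k:ℝ)+1) ^ 2 * π ^ 2 ∧
        ((k:ℝ)+1) ^ 2 * π ^ 2 ≤ (2:ℝ) ^ (n:ℝ)) ↔ (a < (k:ℝ)+1 ∧ (k:ℝ)+1 ≤ b) := by
    intro k
    have hk : (0:ℝ) ≤ (k:ℝ) + 1 := by positivity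
    have h1 : (2:ℝ) ^ ((n:ℝ) - 1) < ((k:ℝ)+1) ^ 2 * π ^ 2 ↔ a < (k:ℝ)+1 := by
      rw [← hsA2, show ((k:ℝ)+1) ^ 2 * π ^ 2 = (((k:ℝ)+1) * π) ^ 2 by ring,
        pow_lt_pow_iff_left₀ hsApos.le (by positivity) (by norm_num),
        hadef, div_lt_iff₀ hπ]
    have h2 : ((k:ℝ)+1) ^ 2 * π ^ 2 ≤ (2:ℝ) ^ (n:ℝ) ↔ (k:ℝ)+1 ≤ b := by
      rw [← hsB2, show ((k:ℝ)+1) ^ 2 * π ^ 2 = (((k:ℝ)+1) * π) ^ 2 by ring,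
        pow_le_pow_iff_left₀ (by positivity) hsBpos.le (by norm_num),
        hbdef, le_div_iff₀ hπ]
    rw [h1, h2]
  set f : ℕ → ℝ := fun k => if (2:ℝ) ^ ((n:ℝ) - 1) < ((k:ℝ)+1) ^ 2 * π ^ 2 ∧
          ((k:ℝ)+1) ^ 2 * π ^ 2 ≤ (2:ℝ) ^ (n:ℝ) then ((k:ℝ)+1) ^ 2 else 0 with hf
  set F : Finset ℕ := Finset.Ico ⌊a⌋₊ ⌊b⌋₊ with hF
  have hmem : ∀ k ∈ F, a < (k:ℝ)+1 ∧ (k:ℝ)+1 ≤ b := by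
    intro k hk
    rw [hF, Finset.mem_Ico] at hk
    constructor
    · calc a < ⌊a⌋₊ + 1 := Nat.lt_floor_add_one a
        _ ≤ (k:ℝ) + 1 := by exact_mod_cast by exact_mod_cast add_le_add_left (Nat.cast_le.mpr hk.1) 1
    · calc (k:ℝ) + 1 ≤ (⌊b⌋₊ : ℝ) := by exact_mod_cast hk.2
        _ ≤ b := Nat.floor_le hb.le
  have hout : ∀ k ∉ F, f k = 0 := by
    intro k hk
    rw [hf]
    simp only
    rw [if_neg]
    intro hc
    rw [hcond k] at hc
    apply hk
    rw [hF, Finset.mem_Ico]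
    constructor
    · have : (⌊a⌋₊ : ℝ) < (k:ℝ) + 1 := lt_of_le_of_lt (Nat.floor_le ha.le) hc.1
      exact_mod_cast Nat.lt_add_one_iff.mp (by exact_mod_cast this)
    · have h' : (k+1 : ℕ) ≤ ⌊b⌋₊ := Nat.le_floor (by exact_mod_cast hc.2)
      omega
  have htsum : ∑' k, f k = ∑ k ∈ F, f k := tsum_eq_sum hout
  have hsum_lb : (F.card : ℝ) * a ^ 2 ≤ ∑ k ∈ F, f k := by
    have : ∀ k ∈ F, a ^ 2 ≤ f k := by
      intro k hk
      have h := hmem k hk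
      rw [hf]
      simp only
      rw [if_pos ((hcond k).mpr h)]
      exact pow_le_pow_left₀ ha.le (h.1.le) 2
    calc (F.card : ℝ) * a ^ 2 = F.card • a^2 := by rw [nsmul_eq_mul]
      _ ≤ ∑ k ∈ F, f k := Finset.card_nsmul_le_sum F f (a^2) this
  -- card lower bound
  have hfloorle : ⌊a⌋₊ ≤ ⌊b⌋₊ := Nat.floor_le_floor hab
  have hcard : (F.card : ℝ) = (⌊b⌋₊ : ℝ) - (⌊a⌋₊ : ℝ) := by
    rw [hF, Nat.card_Ico, Nat.cast_sub hfloorle]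
  have hcard_lb : b - a - 1 ≤ (F.card : ℝ) := by
    rw [hcard]
    have h1 : b - 1 < (⌊b⌋₊ : ℝ) := Nat.sub_one_lt_floor b
    have h2 : (⌊a⌋₊ : ℝ) ≤ a := Nat.floor_le ha.le
    linarith
  -- b - a ≥ sB/16
  have hsAB : sA = sB * (2:ℝ) ^ (-(1/2):ℝ) := by
    rw [hsA, hsB, ← Real.rpow_add (by norm_num)]
    ring_nf
  have hhalf : (2:ℝ) ^ (-(1/2):ℝ) ≤ 3/4 := by
    have h : (2:ℝ) ^ (-(1/2):ℝ) = (Real.sqrt 2)⁻¹ := by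
      rw [Real.sqrt_eq_rpow, ← Real.rpow_neg (by norm_num)]
    rw [h, inv_le_comm₀ (Real.sqrt_pos.mpr (by norm_num)) (by norm_num)]
    rw [show (3/4:ℝ)⁻¹ = 4/3 by norm_num, Real.le_sqrt (by norm_num)]
    all_goals norm_num
  have hπ4 : π ≤ 4 := Real.pi_le_four
  have hba : sB / 16 ≤ b - a := by
    have h1 : sA ≤ sB * (3/4) := by
      rw [hsAB]
      exact mul_le_mul_of_nonneg_left hhalf hsBpos.le
    rw [hadef, hbdef, div_sub_div_same, le_div_iff₀ hπ]
    nlinarith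
  have hsB32 : (32:ℝ) ≤ sB := by
    have : (2:ℝ) ^ ((5:ℕ):ℝ) ≤ (2:ℝ) ^ ((n:ℝ)/2) := by
      apply Real.rpow_le_rpow_of_exponent_le (by norm_num)
      have : (10:ℝ) ≤ (n:ℝ) := by exact_mod_cast hn
      push_cast
      linarith
    rw [Real.rpow_natCast] at this
    norm_num at this
    linarith [this]
  have hcard_lb2 : sB / 32 ≤ (F.card : ℝ) := by
    have : sB/16 - 1 ≤ b - a - 1 := by linarith
    have h32 : sB/32 ≤ sB/16 - 1 := by linarith
    linarith
  -- assemble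
  have h2pa : 2 * π^2 * a^2 = (2:ℝ) ^ (n:ℝ) := by
    have h2 : (2:ℝ)^((n:ℝ)) = (2:ℝ)^((n:ℝ)-1) * 2 := by
      rw [show (n:ℝ) = ((n:ℝ)-1) + 1 by ring, Real.rpow_add (by norm_num), Real.rpow_one]
      norm_num
    rw [hadef, div_pow, h2, ← hsA2]
    field_simp
  have hμ_lb : (F.card : ℝ) * (2:ℝ) ^ (n:ℝ) ≤ μSn := by
    rw [hμ, htsum]
    calc (F.card : ℝ) * (2:ℝ) ^ (n:ℝ) = (F.card : ℝ) * (2 * π^2 * a^2) := by rw [h2pa]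
      _ = 2 * π^2 * ((F.card : ℝ) * a^2) := by ring
      _ ≤ 2 * π^2 * ∑ k ∈ F, f k := by
          apply mul_le_mul_of_nonneg_left hsum_lb (by positivity)
  have hexp : (2:ℝ) ^ (-(3 * (n:ℝ)) / 2) * (2:ℝ) ^ (n:ℝ) = sB⁻¹ := by
    rw [hsB, ← Real.rpow_neg (by norm_num), ← Real.rpow_add (by norm_num)]
    congr 1
    ring
  have hpow_pos : (0:ℝ) < (2:ℝ) ^ (-(3 * (n:ℝ)) / 2) := Real.rpow_pos_of_pos (by norm_num) _
  calc (1:ℝ)/32 = (sB/32) * sB⁻¹ := by field_simp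
    _ ≤ (F.card : ℝ) * sB⁻¹ := by
        apply mul_le_mul_of_nonneg_right hcard_lb2 (by positivity)
    _ = (F.card : ℝ) * ((2:ℝ) ^ (-(3 * (n:ℝ)) / 2) * (2:ℝ) ^ (n:ℝ)) := by rw [hexp]
    _ = (2:ℝ) ^ (-(3 * (n:ℝ)) / 2) * ((F.card : ℝ) * (2:ℝ) ^ (n:ℝ)) := by ring
    _ ≤ (2:ℝ) ^ (-(3 * (n:ℝ)) / 2) * μSn := mul_le_mul_of_nonneg_left hμ_lb hpow_pos.le

/-- With `μ = ∑_k 2k²π² δ_{k²π²}` and `S_n = (2^{n-1}, 2^n]`, the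
sequence `{2^{-3n/2} μ(S_n)}` does not tend to `0`, hence is not square-summable:
the Dirichlet heat control element is not `L⁴`-admissible. -/
theorem dirichlet_heat_not_L4_admissible_carleson
    (μS : ℕ → ℝ)
    (hμS : ∀ n : ℕ, μS n = 2 * π ^ 2 *
      ∑' k : ℕ, if (2:ℝ) ^ ((n:ℝ) - 1) < ((k:ℝ)+1) ^ 2 * π ^ 2 ∧
          ((k:ℝ)+1) ^ 2 * π ^ 2 ≤ (2:ℝ) ^ (n:ℝ) then ((k:ℝ)+1) ^ 2 else 0) :
    ¬ Tendsto (fun n : ℕ => (2:ℝ) ^ (-(3 * (n:ℝ)) / 2) * μS n) atTop (nhds 0) ∧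
    ¬ Summable (fun n : ℕ => ((2:ℝ) ^ (-(3 * (n:ℝ)) / 2) * μS n) ^ 2) := by
  have hlow : ∀ n : ℕ, 10 ≤ n → 1/32 ≤ (2:ℝ) ^ (-(3 * (n:ℝ)) / 2) * μS n :=
    fun n hn => key_lb n hn (μS n) (hμS n)
  have hnot : ¬ Tendsto (fun n : ℕ => (2:ℝ) ^ (-(3 * (n:ℝ)) / 2) * μS n) atTop (nhds 0) := by
    intro h
    have he := h.eventually (gt_mem_nhds (show (0:ℝ) < 1/32 by norm_num))
    rw [eventually_atTop] at he
    obtain ⟨N, hN⟩ := he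
    have h1 := hN (max N 10) (le_max_left _ _)
    have h2 := hlow (max N 10) (le_max_right _ _)
    linarith
  refine ⟨hnot, fun hs => hnot ?_⟩
  have hsq := hs.tendsto_atTop_zero
  have hnn : ∀ n : ℕ, 0 ≤ (2:ℝ) ^ (-(3 * (n:ℝ)) / 2) * μS n := by
    intro n
    apply mul_nonneg (Real.rpow_nonneg (by norm_num) _)
    rw [hμS n]
    apply mul_nonneg (by positivity)
    apply tsum_nonneg
    intro k; split <;> positivity
  have hsqrt : Tendsto (fun n : ℕ => Real.sqrt (((2:ℝ) ^ (-(3 * (n:ℝ)) / 2) * μS n)^2))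
      atTop (nhds 0) := by
    have := hsq.sqrt
    simpa using this
  have heq : (fun n : ℕ => Real.sqrt (((2:ℝ) ^ (-(3 * (n:ℝ)) / 2) * μS n)^2)) =
      (fun n : ℕ => (2:ℝ) ^ (-(3 * (n:ℝ)) / 2) * μS n) :=
    funext fun n => Real.sqrt_sq (hnn n)
  rwa [heq] at hsqrt
end

section
/- Let (Ω, μ) be a σ-finite measure space, 1 < q < ∞, and a: Ω → ℂ measurable with Re a(t) < 0 μ-a.e. Let T(s)f = e^{sa}f be the multiplication semigroup on L^q(Ω,μ) and b: Ω → ℂ with ∫_Ω |b|^q |Re a|^{-1} dμ < ∞. Then there is C > 0 such that for all u ∈ L^{q'}([0,∞)), ‖∫₀^∞ e^{sa} b u(s) ds‖_{L^q(Ω,μ)} ≤ C ‖u‖_{L^{q'}([0,∞))}; i.e. b is L^{q'}-admissible for T. -/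
open MeasureTheory Real Set
open scoped ENNReal NNReal

private lemma integral_exp_neg_mul_Ioi_aux {b : ℝ} (hb : 0 < b) :
    ∫ x in Ioi (0:ℝ), Real.exp (-b * x) = b⁻¹ := by
  have h := integral_exp_neg_mul_rpow one_pos hb
  simpa [Real.rpow_one, show (1:ℝ) + 1 = 2 by norm_num, Real.Gamma_two,
    Real.rpow_neg_one] using h

/-- For a σ-finite measure space `(Ω,μ)`, `1 < q < ∞`, `a : Ω → ℂ`
measurable with `Re a < 0` a.e., and the multiplication semigroup `(T(s)f)(t) = e^{s a(t)} f(t)`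
on `L^q(Ω,μ)`: if `∫ |b|^q |Re a|⁻¹ dμ < ∞` then `b` is `L^{q'}`-admissible, i.e.
`‖∫₀^∞ e^{s a} b u(s) ds‖_{L^q} ≤ C ‖u‖_{L^{q'}([0,∞))}`. -/
theorem multiplication_semigroup_admissibility_sufficient
    {Ω : Type*} [MeasurableSpace Ω] (μ : Measure Ω) [SigmaFinite μ]
    (q q' : ℝ) (hq1 : 1 < q) (hconj : 1 / q + 1 / q' = 1)
    (a b : Ω → ℂ) (ha : Measurable a) (hb : Measurable b)
    (haneg : ∀ᵐ t ∂μ, (a t).re < 0)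
    (hbint : ∫⁻ t, ENNReal.ofReal (‖b t‖ ^ q / |(a t).re|) ∂μ < ⊤) :
    ∃ C > 0, ∀ u : ℝ → ℂ,
      MemLp u (ENNReal.ofReal q') (volume.restrict (Ioi (0:ℝ))) →
      eLpNorm (fun t : Ω => ∫ s in Ioi (0:ℝ), Complex.exp ((s:ℂ) * a t) * b t * u s)
          (ENNReal.ofReal q) μ
        ≤ ENNReal.ofReal C * eLpNorm u (ENNReal.ofReal q') (volume.restrict (Ioi (0:ℝ))) := by
  have hq0 : 0 < q := lt_trans one_pos hq1
  have hqq' : Real.HolderConjugate q q' := Real.holderConjugate_iff.mpr ⟨hq1, by simpa only [one_div] using hconj⟩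
  have hq'0 : 0 < q' := hqq'.symm.pos
  set I : ℝ≥0∞ := ∫⁻ t, (‖b t‖₊ : ℝ≥0∞) ^ q * ENNReal.ofReal ((q * |(a t).re|)⁻¹) ∂μ with hIdef
  have hIle : I ≤ ∫⁻ t, ENNReal.ofReal (‖b t‖ ^ q / |(a t).re|) ∂μ := by
    refine lintegral_mono fun t => ?_
    rw [← enorm_eq_nnnorm, ← ofReal_norm,
      ENNReal.ofReal_rpow_of_nonneg (norm_nonneg _) hq0.le,
      ← ENNReal.ofReal_mul (by positivity)]
    refine ENNReal.ofReal_le_ofReal ?_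
    rw [div_eq_mul_inv, mul_inv]
    have h1 : q⁻¹ * |(a t).re|⁻¹ ≤ 1 * |(a t).re|⁻¹ := by
      have : q⁻¹ ≤ 1 := by
        rw [inv_le_one_iff₀]; right; exact hq1.le
      exact mul_le_mul_of_nonneg_right this (by positivity)
    calc ‖b t‖ ^ q * (q⁻¹ * |(a t).re|⁻¹) ≤ ‖b t‖ ^ q * (1 * |(a t).re|⁻¹) := by
          exact mul_le_mul_of_nonneg_left h1 (by positivity)
      _ = ‖b t‖ ^ q * |(a t).re|⁻¹ := by ring
  have hIfin : I ≠ ⊤ := (lt_of_le_of_lt hIle hbint).ne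
  have hI1q : I ^ (1/q) ≠ ⊤ := ENNReal.rpow_ne_top_of_nonneg (by positivity) hIfin
  refine ⟨(I ^ (1/q)).toReal + 1, by positivity, fun u hu => ?_⟩
  have hIC : I ^ (1/q) ≤ ENNReal.ofReal ((I ^ (1/q)).toReal + 1) := by
    conv_lhs => rw [← ENNReal.ofReal_toReal hI1q]
    exact ENNReal.ofReal_le_ofReal (by linarith)
  set N : ℝ≥0∞ := eLpNorm u (ENNReal.ofReal q') (volume.restrict (Ioi (0:ℝ))) with hNdef
  have hNfin : N ≠ ⊤ := hu.eLpNorm_ne_top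
  have hNval : N = (∫⁻ s in Ioi (0:ℝ), (‖u s‖₊ : ℝ≥0∞) ^ q') ^ (1/q') := by
    rw [hNdef, eLpNorm_eq_lintegral_rpow_enorm_toReal (ENNReal.ofReal_pos.mpr hq'0).ne'
      ENNReal.ofReal_ne_top, ENNReal.toReal_ofReal hq'0.le]
    rfl
  -- pointwise a.e. bound via Hölder on (0,∞)
  have key : ∀ᵐ t ∂μ,
      (‖∫ s in Ioi (0:ℝ), Complex.exp ((s:ℂ) * a t) * b t * u s‖₊ : ℝ≥0∞)
        ≤ (‖b t‖₊ : ℝ≥0∞) * ENNReal.ofReal ((q * |(a t).re|)⁻¹) ^ (1/q) * N := by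
    filter_upwards [haneg] with t hc
    have hnorm : ∀ s : ℝ,
        (‖Complex.exp ((s:ℂ) * a t) * b t * u s‖₊ : ℝ≥0∞)
          = (‖b t‖₊ : ℝ≥0∞) * (ENNReal.ofReal (Real.exp (s * (a t).re)) * (‖u s‖₊ : ℝ≥0∞)) := by
      intro s
      have hre : ((s:ℂ) * a t).re = s * (a t).re := by
        simp [Complex.mul_re]
      rw [← enorm_eq_nnnorm, ← ofReal_norm, ← enorm_eq_nnnorm (b t), ← ofReal_norm (b t),
        ← enorm_eq_nnnorm (u s), ← ofReal_norm (u s), norm_mul, norm_mul]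
      rw [Complex.norm_exp, hre]
      rw [ENNReal.ofReal_mul (by positivity), ENNReal.ofReal_mul (Real.exp_pos _).le]
      ring
    have hexpint : (∫⁻ s in Ioi (0:ℝ), ENNReal.ofReal (Real.exp (s * (a t).re)) ^ q)
        = ENNReal.ofReal ((q * |(a t).re|)⁻¹) := by
      have hbpos : 0 < q * -(a t).re := by
        have : 0 < -(a t).re := by linarith
        positivity
      have h1 : ∀ s : ℝ, ENNReal.ofReal (Real.exp (s * (a t).re)) ^ q
          = ENNReal.ofReal (Real.exp (-(q * -(a t).re) * s)) := by
        intro s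
        rw [ENNReal.ofReal_rpow_of_pos (Real.exp_pos _), ← Real.exp_mul]
        congr 2
        ring
      simp_rw [h1]
      rw [← ofReal_integral_eq_lintegral_ofReal (exp_neg_integrableOn_Ioi 0 hbpos)
        (ae_of_all _ fun s => (Real.exp_pos _).le), integral_exp_neg_mul_Ioi_aux hbpos]
      congr 1
      rw [abs_of_neg hc]
    calc (‖∫ s in Ioi (0:ℝ), Complex.exp ((s:ℂ) * a t) * b t * u s‖₊ : ℝ≥0∞)
        ≤ ∫⁻ s in Ioi (0:ℝ), ‖Complex.exp ((s:ℂ) * a t) * b t * u s‖₊ :=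
          enorm_integral_le_lintegral_enorm _
      _ = (‖b t‖₊ : ℝ≥0∞) * ∫⁻ s in Ioi (0:ℝ),
            ENNReal.ofReal (Real.exp (s * (a t).re)) * (‖u s‖₊ : ℝ≥0∞) := by
          simp_rw [hnorm]
          exact lintegral_const_mul' _ _ ENNReal.coe_ne_top
      _ ≤ (‖b t‖₊ : ℝ≥0∞) *
            ((∫⁻ s in Ioi (0:ℝ), ENNReal.ofReal (Real.exp (s * (a t).re)) ^ q) ^ (1/q) *
             (∫⁻ s in Ioi (0:ℝ), (‖u s‖₊ : ℝ≥0∞) ^ q') ^ (1/q')) := by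
          refine mul_le_mul_right ?_ _
          exact ENNReal.lintegral_mul_le_Lp_mul_Lq _ hqq'
            ((Real.measurable_exp.comp (measurable_id.mul_const _)).ennreal_ofReal).aemeasurable
            hu.1.enorm
      _ = (‖b t‖₊ : ℝ≥0∞) * ENNReal.ofReal ((q * |(a t).re|)⁻¹) ^ (1/q) * N := by
          rw [hexpint, ← hNval, mul_assoc]
  -- integrate the pointwise bound
  have hp0 : (ENNReal.ofReal q) ≠ 0 := (ENNReal.ofReal_pos.mpr hq0).ne'
  calc eLpNorm (fun t : Ω => ∫ s in Ioi (0:ℝ), Complex.exp ((s:ℂ) * a t) * b t * u s)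
        (ENNReal.ofReal q) μ
      = (∫⁻ t, (‖∫ s in Ioi (0:ℝ), Complex.exp ((s:ℂ) * a t) * b t * u s‖₊ : ℝ≥0∞) ^ q ∂μ)
          ^ (1/q) := by
        rw [eLpNorm_eq_lintegral_rpow_enorm_toReal hp0 ENNReal.ofReal_ne_top,
          ENNReal.toReal_ofReal hq0.le]
        rfl
    _ ≤ (∫⁻ t, ((‖b t‖₊ : ℝ≥0∞) ^ q * ENNReal.ofReal ((q * |(a t).re|)⁻¹)) * N ^ q ∂μ)
          ^ (1/q) := by
        refine ENNReal.rpow_le_rpow (lintegral_mono_ae ?_) (by positivity)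
        filter_upwards [key] with t ht
        calc (‖∫ s in Ioi (0:ℝ), Complex.exp ((s:ℂ) * a t) * b t * u s‖₊ : ℝ≥0∞) ^ q
            ≤ ((‖b t‖₊ : ℝ≥0∞) * ENNReal.ofReal ((q * |(a t).re|)⁻¹) ^ (1/q) * N) ^ q :=
              ENNReal.rpow_le_rpow ht hq0.le
          _ = ((‖b t‖₊ : ℝ≥0∞) ^ q * ENNReal.ofReal ((q * |(a t).re|)⁻¹)) * N ^ q := by
              rw [ENNReal.mul_rpow_of_nonneg _ _ hq0.le, ENNReal.mul_rpow_of_nonneg _ _ hq0.le,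
                ← ENNReal.rpow_mul, one_div_mul_cancel hq0.ne', ENNReal.rpow_one]
    _ = (I * N ^ q) ^ (1/q) := by
        rw [lintegral_mul_const' (N ^ q) _ (ENNReal.rpow_ne_top_of_nonneg hq0.le hNfin)]
    _ = I ^ (1/q) * N := by
        rw [ENNReal.mul_rpow_of_nonneg _ _ (by positivity), ← ENNReal.rpow_mul,
          mul_one_div_cancel hq0.ne', ENNReal.rpow_one]
    _ ≤ ENNReal.ofReal ((I ^ (1/q)).toReal + 1) * N := mul_le_mul_left hIC _
end

section
/- Let n ≥ 1, p ∈ (1,∞) with p > 4/(4−n) (and n ≤ 3). Then there is C > 0 such that for all u ∈ L^p([0,∞)), ∫₁^∞ |∫₀^∞ e^{-ty} u(t) dt|² y^{n/2 − 1} dy ≤ C ‖u‖²_{L^p([0,∞))}. -/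
open MeasureTheory Real Set Filter Topology

/-- For `0 < b`, `∫₀^∞ e^{-bt} dt = 1/b`. -/
lemma laplace_aux_integral_exp {b : ℝ} (hb : 0 < b) :
    ∫ t in Ioi (0:ℝ), Real.exp (-b * t) = 1 / b := by
  have hd : ∀ x ∈ Ici (0:ℝ),
      HasDerivAt (fun t => -Real.exp (-b * t) / b) (Real.exp (-b * x)) x := by
    intro x _
    have h : HasDerivAt (fun t : ℝ => -b * t) (-b) x := by
      simpa using (hasDerivAt_id x).const_mul (-b)
    have h2 := (h.exp).neg.div_const b
    exact h2.congr_deriv (by rw [div_eq_iff hb.ne']; ring)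
  have h1 : Tendsto (fun t : ℝ => -b * t) atTop atBot := by
    have h0 : Tendsto (fun t : ℝ => -(b * t)) atTop atBot :=
      tendsto_neg_atTop_atBot.comp (tendsto_id.const_mul_atTop hb)
    simpa [neg_mul] using h0
  have ht : Tendsto (fun t => -Real.exp (-b * t) / b) atTop (𝓝 0) := by
    have h2 : Tendsto (fun t : ℝ => Real.exp (-b * t)) atTop (𝓝 0) :=
      Real.tendsto_exp_atBot.comp h1
    simpa using h2.neg.div_const b
  have := integral_Ioi_of_hasDerivAt_of_tendsto' hd (exp_neg_integrableOn_Ioi 0 hb) ht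
  rw [this]
  simp
  ring

/-- `t ↦ e^{-ty}` is in `L^q(0,∞)` for `y, q > 0`. -/
lemma laplace_aux_memLp {y q : ℝ} (hy : 0 < y) (hq : 0 < q) :
    MemLp (fun t : ℝ => Real.exp (-t * y)) (ENNReal.ofReal q)
      (volume.restrict (Ioi (0:ℝ))) := by
  have hmeas : AEStronglyMeasurable (fun t : ℝ => Real.exp (-t * y))
      (volume.restrict (Ioi (0:ℝ))) := by
    exact (Real.continuous_exp.comp (by continuity)).aestronglyMeasurable
  have hq0 : ENNReal.ofReal q ≠ 0 := by simp [ENNReal.ofReal_eq_zero, not_le, hq]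
  refine (memLp_norm_rpow_iff hmeas hq0 ENNReal.ofReal_ne_top).mp ?_
  rw [ENNReal.div_self hq0 ENNReal.ofReal_ne_top, memLp_one_iff_integrable]
  have heq : (fun t : ℝ => ‖Real.exp (-t * y)‖ ^ (ENNReal.ofReal q).toReal)
      = fun t : ℝ => Real.exp (-(y * q) * t) := by
    funext t
    rw [ENNReal.toReal_ofReal hq.le, Real.norm_eq_abs, abs_of_pos (Real.exp_pos _),
      ← Real.exp_mul]
    congr 1; ring
  rw [heq]
  exact exp_neg_integrableOn_Ioi 0 (mul_pos hy hq)

/-- For `1 ≤ n ≤ 3` and `p > 4/(4-n)`, the weighted Laplace transform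
bound `∫₁^∞ |∫₀^∞ e^{-ty} u(t) dt|² y^{n/2-1} dy ≤ C ‖u‖²_{L^p([0,∞))}` holds,
establishing finite-time `L^p`-admissibility of `δ₀` for the heat semigroup on `ℝⁿ`. -/
theorem laplace_bound_heat_full_space
    (n : ℕ) (hn1 : 1 ≤ n) (hn3 : n ≤ 3) (p : ℝ) (hp1 : 1 < p)
    (hp : 4 / (4 - (n:ℝ)) < p) :
    ∃ C > 0, ∀ u : ℝ → ℝ,
      MemLp u (ENNReal.ofReal p) (volume.restrict (Ioi (0:ℝ))) →
      ∫ y in Ioi (1:ℝ),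
          (∫ t in Ioi (0:ℝ), Real.exp (-t * y) * u t) ^ 2 * y ^ ((n:ℝ)/2 - 1)
        ≤ C * ((eLpNorm u (ENNReal.ofReal p) (volume.restrict (Ioi (0:ℝ)))).toReal) ^ 2 := by
  set q : ℝ := p.conjExponent with hqdef
  have hpq : p.HolderConjugate q := Real.HolderConjugate.conjExponent hp1
  have hp0 : 0 < p := hpq.pos
  have hq0 : 0 < q := hpq.symm.pos
  -- exponent arithmetic
  have hn4 : (0:ℝ) < 4 - (n:ℝ) := by
    have : (n:ℝ) ≤ 3 := by exact_mod_cast hn3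
    linarith
  have h4 : 4 < p * (4 - (n:ℝ)) := (div_lt_iff₀ hn4).mp hp
  have h4p : 4 / p < 4 - (n:ℝ) := by
    rw [div_lt_iff₀ hp0]; nlinarith
  have h2p : 2 / p = (4 / p) / 2 := by ring
  have hqinv : 1 / q = 1 - 1 / p := by
    have := hpq.inv_add_inv_eq_one
    rw [inv_eq_one_div, inv_eq_one_div] at this
    linarith
  have h2q : 2 / q = 2 - 2 / p := by
    have : 2 / q = 2 * (1 / q) := by ring
    rw [this, hqinv]; ring
  set a : ℝ := -(2 / q) + ((n:ℝ) / 2 - 1) with hadef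
  have ha : a < -1 := by
    have hn2 : (n:ℝ) / 2 < 2 - 2 / p := by linarith
    rw [hadef]; linarith
  have ha1 : a + 1 < 0 := by linarith
  set K : ℝ := q ^ (-(2 / q)) with hKdef
  have hK : 0 < K := Real.rpow_pos_of_pos hq0 _
  set I : ℝ := -1 / (a + 1) with hIdef
  have hI : 0 < I := div_pos_of_neg_of_neg (by norm_num) ha1
  refine ⟨K * I, mul_pos hK hI, ?_⟩
  intro u hu
  set μ := volume.restrict (Ioi (0:ℝ))
  set N : ℝ := (eLpNorm u (ENNReal.ofReal p) μ).toReal with hNdef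
  have hN0 : 0 ≤ N := ENNReal.toReal_nonneg
  -- identify N with the integral expression
  have hNeq : (∫ t, ‖u t‖ ^ p ∂μ) ^ (1 / p) = N := by
    rw [hNdef, MemLp.eLpNorm_eq_integral_rpow_norm (by simp [ENNReal.ofReal_eq_zero, not_le, hp0])
      ENNReal.ofReal_ne_top hu]
    rw [ENNReal.toReal_ofReal (Real.rpow_nonneg
      (integral_nonneg fun t => Real.rpow_nonneg (norm_nonneg _) _) _)]
    rw [ENNReal.toReal_ofReal hp0.le, one_div]
  -- pointwise bound for y > 1
  have hpt : ∀ y ∈ Ioi (1:ℝ),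
      (∫ t in Ioi (0:ℝ), Real.exp (-t * y) * u t) ^ 2 * y ^ ((n:ℝ)/2 - 1)
        ≤ (K * N ^ 2) * y ^ a := by
    intro y hy
    have hy0 : 0 < y := lt_trans one_pos hy
    have hyq : 0 < y * q := mul_pos hy0 hq0
    have hExp := laplace_aux_memLp hy0 hq0
    -- Hölder
    have hold : ∫ t, ‖u t‖ * ‖Real.exp (-t * y)‖ ∂μ
        ≤ (∫ t, ‖u t‖ ^ p ∂μ) ^ (1 / p) * (∫ t, ‖Real.exp (-t * y)‖ ^ q ∂μ) ^ (1 / q) :=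
      integral_mul_norm_le_Lp_mul_Lq hpq hu hExp
    have hA : ∫ t, ‖Real.exp (-t * y)‖ ^ q ∂μ = (y * q)⁻¹ := by
      have heq : (fun t : ℝ => ‖Real.exp (-t * y)‖ ^ q)
          = fun t : ℝ => Real.exp (-(y * q) * t) := by
        funext t
        rw [Real.norm_eq_abs, abs_of_pos (Real.exp_pos _), ← Real.exp_mul]
        congr 1; ring
      rw [heq]
      rw [show μ = volume.restrict (Ioi (0:ℝ)) from rfl]
      rw [laplace_aux_integral_exp hyq, one_div]
    have habs : |∫ t in Ioi (0:ℝ), Real.exp (-t * y) * u t|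
        ≤ N * ((y * q)⁻¹) ^ (1 / q) := by
      have h0 : |∫ t in Ioi (0:ℝ), Real.exp (-t * y) * u t|
          ≤ ∫ t, ‖u t‖ * ‖Real.exp (-t * y)‖ ∂μ := by
        calc |∫ t in Ioi (0:ℝ), Real.exp (-t * y) * u t|
            ≤ ∫ t, ‖Real.exp (-t * y) * u t‖ ∂μ := by
              simpa using norm_integral_le_integral_norm
                (μ := μ) (f := fun t => Real.exp (-t * y) * u t)
          _ = ∫ t, ‖u t‖ * ‖Real.exp (-t * y)‖ ∂μ :=
              integral_congr_ae (Eventually.of_forall fun t => by simp [norm_mul, mul_comm])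
      calc |∫ t in Ioi (0:ℝ), Real.exp (-t * y) * u t|
          ≤ ∫ t, ‖u t‖ * ‖Real.exp (-t * y)‖ ∂μ := h0
        _ ≤ (∫ t, ‖u t‖ ^ p ∂μ) ^ (1 / p) * (∫ t, ‖Real.exp (-t * y)‖ ^ q ∂μ) ^ (1 / q) := hold
        _ = N * ((y * q)⁻¹) ^ (1 / q) := by rw [hNeq, hA]
    have hb0 : 0 ≤ N * ((y * q)⁻¹) ^ (1 / q) :=
      mul_nonneg hN0 (Real.rpow_nonneg (inv_nonneg.mpr hyq.le) _)
    have hsq : (∫ t in Ioi (0:ℝ), Real.exp (-t * y) * u t) ^ 2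
        ≤ (N * ((y * q)⁻¹) ^ (1 / q)) ^ 2 :=
      sq_le_sq' (neg_le_of_abs_le habs) (le_of_abs_le habs)
    have hkey : (((y * q)⁻¹) ^ (1 / q)) ^ 2 = K * y ^ (-(2 / q)) := by
      rw [Real.inv_rpow hyq.le, ← Real.rpow_neg hyq.le,
        ← Real.rpow_natCast ((y * q) ^ (-(1/q))) 2, ← Real.rpow_mul hyq.le,
        Real.mul_rpow hy0.le hq0.le]
      push_cast
      rw [show -(1 / q) * 2 = -(2 / q) by ring, hKdef, mul_comm]
    calc (∫ t in Ioi (0:ℝ), Real.exp (-t * y) * u t) ^ 2 * y ^ ((n:ℝ)/2 - 1)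
        ≤ (N * ((y * q)⁻¹) ^ (1 / q)) ^ 2 * y ^ ((n:ℝ)/2 - 1) :=
          mul_le_mul_of_nonneg_right hsq (Real.rpow_nonneg hy0.le _)
      _ = (K * N ^ 2) * (y ^ (-(2 / q)) * y ^ ((n:ℝ)/2 - 1)) := by
          rw [mul_pow, hkey]; ring
      _ = (K * N ^ 2) * y ^ a := by
          rw [← Real.rpow_add hy0, hadef]
  -- integrate the bound
  have hgint : Integrable (fun y : ℝ => (K * N ^ 2) * y ^ a)
      (volume.restrict (Ioi (1:ℝ))) :=
    (integrableOn_Ioi_rpow_of_lt ha one_pos).const_mul _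
  have hmono : ∫ y in Ioi (1:ℝ),
      (∫ t in Ioi (0:ℝ), Real.exp (-t * y) * u t) ^ 2 * y ^ ((n:ℝ)/2 - 1)
        ≤ ∫ y in Ioi (1:ℝ), (K * N ^ 2) * y ^ a := by
    refine integral_mono_of_nonneg ?_ hgint ?_
    · filter_upwards [ae_restrict_mem measurableSet_Ioi] with y hy
      exact mul_nonneg (sq_nonneg _)
        (Real.rpow_nonneg (le_of_lt (lt_trans one_pos hy)) _)
    · filter_upwards [ae_restrict_mem measurableSet_Ioi] with y hy
      exact hpt y hy
  calc ∫ y in Ioi (1:ℝ),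
      (∫ t in Ioi (0:ℝ), Real.exp (-t * y) * u t) ^ 2 * y ^ ((n:ℝ)/2 - 1)
      ≤ ∫ y in Ioi (1:ℝ), (K * N ^ 2) * y ^ a := hmono
    _ = (K * N ^ 2) * ∫ y in Ioi (1:ℝ), y ^ a := integral_const_mul _ _
    _ = (K * N ^ 2) * (-(1:ℝ) ^ (a + 1) / (a + 1)) := by
        rw [integral_Ioi_rpow_of_lt ha one_pos]
    _ = (K * I) * N ^ 2 := by
        rw [Real.one_rpow, hIdef]; ring
end

section
/- Let A be a self-adjoint operator on a Hilbert space X with σ(A) ⊂ (−∞, 0], generating the semigroup T(t) = e^{tA}, and let p' > 2. Then for all x ∈ X, ∫₀^∞ ‖(−A)^{1/p'} T(t) x‖_X^{p'} dt ≤ (1/p') ‖x‖_X^{p'}; i.e. (−A)^{1/p'} is an L^{p'}-admissible observation operator for A. -/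
open MeasureTheory Real Set ENNReal

theorem aux_mink {Ω : Type*} [MeasurableSpace Ω] (μ : Measure Ω) [SigmaFinite μ]
    (f : Ω → ℝ) (hf : Measurable f) (hf0 : ∀ ω, 0 ≤ f ω)
    (p' : ℝ) (hp' : 2 < p') (x : Ω → ℂ) (hxm : Measurable x)
    (hx2 : ∫⁻ ω, (‖x ω‖₊ : ℝ≥0∞) ^ (2:ℝ) ∂μ ≠ ∞) :
    ∫⁻ t in Ioi (0:ℝ),
        (∫⁻ ω, ENNReal.ofReal (f ω ^ (1 / p') * Real.exp (-t * f ω)) ^ (2:ℝ)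
            * (‖x ω‖₊ : ℝ≥0∞) ^ (2:ℝ) ∂μ) ^ (p' / 2)
      ≤ ENNReal.ofReal (1 / p') * (∫⁻ ω, (‖x ω‖₊ : ℝ≥0∞) ^ (2:ℝ) ∂μ) ^ (p' / 2) := by
  have hp0 : (0:ℝ) < p' := by linarith
  set q : ℝ := p' / 2 with hqdef
  have hq1 : (1:ℝ) < q := by rw [hqdef]; linarith
  have hq0 : (0:ℝ) < q := by linarith
  set N : Ω → ℝ≥0∞ := fun ω => (‖x ω‖₊ : ℝ≥0∞) with hN
  set A : ℝ≥0∞ := ∫⁻ ω, N ω ^ (2:ℝ) ∂μ with hA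
  set H : ℝ → Ω → ℝ≥0∞ := fun t ω =>
    ENNReal.ofReal (f ω ^ (1 / p') * Real.exp (-t * f ω)) ^ (2:ℝ) * N ω ^ (2:ℝ) with hH
  set F : ℝ → ℝ≥0∞ := fun t => ∫⁻ ω, H t ω ∂μ with hF
  -- measurability
  have hNm : Measurable N := hxm.nnnorm.coe_nnreal_ennreal
  have hHm : Measurable (Function.uncurry H) := by
    apply Measurable.mul
    · apply Measurable.pow_const
      apply Measurable.ennreal_ofReal
      exact ((hf.comp measurable_snd).pow_const _).mul
        ((measurable_fst.neg.mul (hf.comp measurable_snd)).exp)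
    · exact (hNm.comp measurable_snd).pow_const _
  have hFm : Measurable F := hHm.lintegral_prod_right
  have hFqm : Measurable fun t => F t ^ q := hFm.pow_const _
  -- key pointwise computation
  have hNfin : ∀ ω, N ω ^ p' ≠ ∞ := fun ω =>
    ENNReal.rpow_ne_top_of_nonneg hp0.le coe_ne_top
  have K1 : ∀ ω, (∫⁻ t in Ioi (0:ℝ), H t ω ^ q) ≤ ENNReal.ofReal (1 / p') * N ω ^ p' := by
    intro ω
    have hr0 : ∀ t : ℝ, 0 ≤ f ω ^ (1 / p') * Real.exp (-t * f ω) := fun t =>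
      mul_nonneg (Real.rpow_nonneg (hf0 ω) _) (Real.exp_nonneg _)
    have hHq : ∀ t : ℝ, H t ω ^ q
        = ENNReal.ofReal (f ω * Real.exp (-(p' * f ω) * t)) * N ω ^ p' := by
      intro t
      have h2q : (2:ℝ) * q = p' := by rw [hqdef]; ring
      rw [hH]
      rw [ENNReal.mul_rpow_of_nonneg _ _ hq0.le, ← ENNReal.rpow_mul, ← ENNReal.rpow_mul, h2q]
      congr 1
      rw [ENNReal.ofReal_rpow_of_nonneg (hr0 t) hp0.le]
      congr 1
      rw [Real.mul_rpow (Real.rpow_nonneg (hf0 ω) _) (Real.exp_nonneg _),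
        ← Real.rpow_mul (hf0 ω), one_div_mul_cancel hp0.ne', Real.rpow_one,
        ← Real.exp_mul]
      ring_nf
    rcases eq_or_lt_of_le (hf0 ω) with h0 | hpos
    · have : ∀ t : ℝ, H t ω ^ q = 0 := by
        intro t
        rw [hHq t, ← h0]
        simp
      simp only [this, lintegral_zero]
      exact zero_le
    · set b : ℝ := p' * f ω with hb
      have hbpos : 0 < b := mul_pos hp0 hpos
      have hint : IntegrableOn (fun t : ℝ => f ω * Real.exp (-b * t)) (Ioi 0) :=
        (exp_neg_integrableOn_Ioi 0 hbpos).const_mul _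
      have hval : (∫ t in Ioi (0:ℝ), f ω * Real.exp (-b * t)) = 1 / p' := by
        rw [MeasureTheory.integral_const_mul]
        have h1 : (∫ t in Ioi (0:ℝ), Real.exp (-b * t)) = b⁻¹ := by
          have h2 := integral_comp_mul_left_Ioi (fun u => Real.exp (-u)) 0 hbpos
          simp only [mul_zero, integral_exp_neg_Ioi_zero, smul_eq_mul, mul_one] at h2
          rw [← h2]
          congr 1
          ext t
          ring_nf
        rw [h1, hb]
        field_simp
      calc (∫⁻ t in Ioi (0:ℝ), H t ω ^ q)
          = ∫⁻ t in Ioi (0:ℝ), ENNReal.ofReal (f ω * Real.exp (-b * t)) * N ω ^ p' := by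
            simp_rw [hHq]
        _ = (∫⁻ t in Ioi (0:ℝ), ENNReal.ofReal (f ω * Real.exp (-b * t))) * N ω ^ p' :=
            lintegral_mul_const' _ _ (hNfin ω)
        _ = ENNReal.ofReal (1 / p') * N ω ^ p' := by
            rw [← ofReal_integral_eq_lintegral_ofReal hint
              (Filter.Eventually.of_forall fun t => by positivity), hval]
        _ ≤ ENNReal.ofReal (1 / p') * N ω ^ p' := le_rfl
  -- conjugate exponent
  set q' : ℝ := Real.conjExponent q with hq'def
  have hconj : q.HolderConjugate q' := Real.HolderConjugate.conjExponent hq1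
  have hq'pos : 0 < q' := hconj.symm.pos
  have hqq' : (q - 1) * q' = q := by
    rw [hq'def, Real.conjExponent, mul_comm, div_mul_cancel₀ _ (by linarith : q - 1 ≠ 0)]
  -- Minkowski on finite pieces
  have K2 : ∀ s : Set ℝ, MeasurableSet s → s ⊆ Ioi 0 → (∫⁻ t in s, F t ^ q) ≠ ∞ →
      (∫⁻ t in s, F t ^ q) ≤ ENNReal.ofReal (1 / p') * A ^ q := by
    intro s hs hssub hIfin
    set I : ℝ≥0∞ := ∫⁻ t in s, F t ^ q with hI
    rcases eq_or_ne I 0 with hI0 | hI0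
    · rw [hI0]; exact zero_le
    have haelt : ∀ᵐ t ∂(volume.restrict s), F t < ∞ := by
      filter_upwards [ae_lt_top hFqm hIfin] with t ht
      by_contra h
      rw [not_lt, top_le_iff] at h
      rw [h, ENNReal.top_rpow_of_pos hq0] at ht
      exact (lt_irrefl _ ht).elim
    have hKm : Measurable (Function.uncurry fun t ω => H t ω * F t ^ (q - 1)) :=
      hHm.mul ((hFm.comp measurable_fst).pow_const _)
    have step1 : I ≤ (ENNReal.ofReal (1 / p')) ^ (1 / q) * A * I ^ (1 / q') := by
      calc I = ∫⁻ t in s, F t * F t ^ (q - 1) ∂volume := by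
              refine lintegral_congr fun t => ?_
              have h : F t ^ q = F t ^ (1 + (q - 1)) := by norm_num
              rw [h, ENNReal.rpow_add_of_nonneg _ _ zero_le_one (by linarith), ENNReal.rpow_one]
        _ = ∫⁻ t in s, ∫⁻ ω, H t ω * F t ^ (q - 1) ∂μ ∂volume := by
              refine lintegral_congr_ae ?_
              filter_upwards [haelt] with t ht
              rw [hF, lintegral_mul_const' _ _
                (ENNReal.rpow_ne_top_of_nonneg (by linarith) ht.ne)]
        _ = ∫⁻ ω, ∫⁻ t in s, H t ω * F t ^ (q - 1) ∂volume ∂μ :=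
              lintegral_lintegral_swap hKm.aemeasurable
        _ ≤ ∫⁻ ω, (∫⁻ t in s, H t ω ^ q ∂volume) ^ (1 / q)
              * (∫⁻ t in s, (F t ^ (q - 1)) ^ q' ∂volume) ^ (1 / q') ∂μ := by
              refine lintegral_mono fun ω => ?_
              exact ENNReal.lintegral_mul_le_Lp_mul_Lq _ hconj
                (hHm.comp measurable_prodMk_right).aemeasurable
                ((hFm.pow_const _).aemeasurable)
        _ ≤ ∫⁻ ω, (ENNReal.ofReal (1 / p') * N ω ^ p') ^ (1 / q) * I ^ (1 / q') ∂μ := by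
              refine lintegral_mono fun ω => ?_
              have h1 : (∫⁻ t in s, H t ω ^ q ∂volume) ^ (1 / q)
                  ≤ (ENNReal.ofReal (1 / p') * N ω ^ p') ^ (1 / q) := by
                apply ENNReal.rpow_le_rpow _ (by positivity)
                exact le_trans (lintegral_mono_set hssub) (K1 ω)
              have h2 : (∫⁻ t in s, (F t ^ (q - 1)) ^ q' ∂volume) ^ (1 / q') = I ^ (1 / q') := by
                congr 1
                refine lintegral_congr fun t => ?_
                rw [← ENNReal.rpow_mul, hqq']
              rw [← h2]
              exact mul_le_mul' h1 le_rfl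
        _ = (ENNReal.ofReal (1 / p')) ^ (1 / q) * A * I ^ (1 / q') := by
              have hexp : p' * (1 / q) = 2 := by rw [hqdef]; field_simp
              simp_rw [ENNReal.mul_rpow_of_nonneg _ _ (by positivity : (0:ℝ) ≤ 1/q),
                ← ENNReal.rpow_mul, hexp]
              rw [lintegral_mul_const' _ _
                  (ENNReal.rpow_ne_top_of_nonneg (by positivity) hIfin),
                lintegral_const_mul' _ _ (ENNReal.rpow_ne_top_of_nonneg (by positivity) ENNReal.ofReal_ne_top)]
    -- finish the division argument
    have hIfin' : I ≠ ∞ := hIfin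
    have hIq' : I ^ (1 / q') ≠ 0 :=
      (ENNReal.rpow_pos (pos_iff_ne_zero.mpr hI0) hIfin').ne'
    have hIq'top : I ^ (1 / q') ≠ ∞ := ENNReal.rpow_ne_top_of_nonneg (by positivity) hIfin'
    have hsplit : I = I ^ (1 / q) * I ^ (1 / q') := by
      have hsum : 1 / q + 1 / q' = 1 := by
        rw [one_div, one_div]; exact hconj.inv_add_inv_eq_one
      rw [← ENNReal.rpow_add_of_nonneg _ _ (by positivity) (by positivity), hsum,
        ENNReal.rpow_one]
    have hmain : I ^ (1 / q) ≤ (ENNReal.ofReal (1 / p')) ^ (1 / q) * A := by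
      rw [← ENNReal.mul_le_mul_iff_left hIq' hIq'top, ← hsplit]
      exact step1
    calc I = (I ^ (1 / q)) ^ q := by
            rw [← ENNReal.rpow_mul, one_div_mul_cancel hq0.ne', ENNReal.rpow_one]
      _ ≤ ((ENNReal.ofReal (1 / p')) ^ (1 / q) * A) ^ q :=
            ENNReal.rpow_le_rpow hmain hq0.le
      _ = ENNReal.ofReal (1 / p') * A ^ q := by
            rw [ENNReal.mul_rpow_of_nonneg _ _ hq0.le, ← ENNReal.rpow_mul,
              one_div_mul_cancel hq0.ne', ENNReal.rpow_one]
  -- truncation and supremum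
  set sn : ℕ → Set ℝ := fun n => Ioo ((n + 1 : ℝ)⁻¹) (n + 1) with hsn
  have hsub : ∀ n, sn n ⊆ Ioi 0 := fun n t ht => lt_trans (by positivity) ht.1
  have key : ∀ n, (∫⁻ t in sn n, F t ^ q) ≤ ENNReal.ofReal (1 / p') * A ^ q := by
    intro n
    apply K2 _ measurableSet_Ioo (hsub n)
    set ε : ℝ := ((n : ℝ) + 1)⁻¹ with hε
    have hε0 : 0 < ε := by positivity
    have hFb : ∀ t ∈ sn n, F t ≤ ENNReal.ofReal ((1 + ε⁻¹) ^ (2:ℝ)) * A := by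
      intro t ht
      have htε : ε ≤ t := le_of_lt ht.1
      have ht0 : 0 < t := lt_of_lt_of_le hε0 htε
      have hr : ∀ ω, f ω ^ (1 / p') * Real.exp (-t * f ω) ≤ 1 + ε⁻¹ := by
        intro ω
        have h1 : f ω ^ (1 / p') ≤ 1 + f ω := by
          rcases le_total (f ω) 1 with h | h
          · have := Real.rpow_le_one (hf0 ω) h (by positivity : (0:ℝ) ≤ 1 / p')
            linarith [hf0 ω]
          · have h2 : f ω ^ (1 / p') ≤ f ω ^ (1:ℝ) :=
              Real.rpow_le_rpow_of_exponent_le h (by rw [div_le_one hp0]; linarith)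
            rw [Real.rpow_one] at h2
            linarith
        have he1 : Real.exp (-t * f ω) ≤ 1 := by
          rw [Real.exp_le_one_iff]
          have := hf0 ω
          nlinarith
        have he2 : f ω * Real.exp (-t * f ω) ≤ ε⁻¹ := by
          rcases eq_or_lt_of_le (hf0 ω) with h0 | hfw
          · rw [← h0]
            simp
            positivity
          · have hmono : Real.exp (-t * f ω) ≤ Real.exp (-(ε * f ω)) := by
              apply Real.exp_le_exp.mpr
              nlinarith
            have hb : ε * f ω ≤ Real.exp (ε * f ω) := by
              nlinarith [Real.add_one_le_exp (ε * f ω)]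
            have hinv : Real.exp (-(ε * f ω)) ≤ (ε * f ω)⁻¹ := by
              rw [Real.exp_neg]
              exact inv_anti₀ (by positivity) hb
            calc f ω * Real.exp (-t * f ω) ≤ f ω * (ε * f ω)⁻¹ :=
                  mul_le_mul_of_nonneg_left (le_trans hmono hinv) (hf0 ω)
              _ = ε⁻¹ := by
                  rw [mul_inv]
                  rw [mul_comm ε⁻¹ (f ω)⁻¹, ← mul_assoc, mul_inv_cancel₀ hfw.ne']
                  ring
        calc f ω ^ (1 / p') * Real.exp (-t * f ω)
            ≤ (1 + f ω) * Real.exp (-t * f ω) :=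
              mul_le_mul_of_nonneg_right h1 (Real.exp_nonneg _)
          _ = Real.exp (-t * f ω) + f ω * Real.exp (-t * f ω) := by ring
          _ ≤ 1 + ε⁻¹ := add_le_add he1 he2
      calc F t ≤ ∫⁻ ω, ENNReal.ofReal ((1 + ε⁻¹) ^ (2:ℝ)) * N ω ^ (2:ℝ) ∂μ := by
            refine lintegral_mono fun ω => ?_
            refine mul_le_mul' ?_ le_rfl
            rw [← ENNReal.ofReal_rpow_of_nonneg (by positivity) (by norm_num)]
            exact ENNReal.rpow_le_rpow (ENNReal.ofReal_le_ofReal (hr ω)) (by norm_num)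
        _ = ENNReal.ofReal ((1 + ε⁻¹) ^ (2:ℝ)) * A := lintegral_const_mul' _ _ ENNReal.ofReal_ne_top
    have hbound : (∫⁻ t in sn n, F t ^ q)
        ≤ (ENNReal.ofReal ((1 + ε⁻¹) ^ (2:ℝ)) * A) ^ q * volume (sn n) := by
      calc (∫⁻ t in sn n, F t ^ q)
          ≤ ∫⁻ _ in sn n, (ENNReal.ofReal ((1 + ε⁻¹) ^ (2:ℝ)) * A) ^ q ∂volume :=
            setLIntegral_mono measurable_const fun t ht => ENNReal.rpow_le_rpow (hFb t ht) hq0.le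
        _ = _ := by rw [setLIntegral_const]
    refine ne_top_of_le_ne_top ?_ hbound
    apply ENNReal.mul_ne_top
    · exact ENNReal.rpow_ne_top_of_nonneg hq0.le
        (ENNReal.mul_ne_top ENNReal.ofReal_ne_top hx2)
    · rw [hsn]
      simp only [Real.volume_Ioo]
      exact ENNReal.ofReal_ne_top
  have hmono : Monotone fun n => (sn n).indicator fun u => F u ^ q := by
    intro m k hmk
    apply indicator_le_indicator_of_subset
    · have hmk' : (m : ℝ) + 1 ≤ (k : ℝ) + 1 := by
        have : (m:ℝ) ≤ k := Nat.cast_le.mpr hmk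
        linarith
      exact Ioo_subset_Ioo (inv_anti₀ (by positivity) hmk') hmk'
    · exact fun t => zero_le
  have hind : ∀ t, (⨆ n, (sn n).indicator (fun u => F u ^ q) t)
      = (Ioi (0:ℝ)).indicator (fun u => F u ^ q) t := by
    intro t
    by_cases ht : t ∈ Ioi (0:ℝ)
    · rw [indicator_of_mem ht]
      obtain ⟨n, hn⟩ : ∃ n : ℕ, t ∈ sn n := by
        obtain ⟨n, hnt⟩ := exists_nat_gt (max t t⁻¹)
        have ht0 : (0:ℝ) < t := ht
        refine ⟨n, ?_, lt_trans (lt_of_le_of_lt (le_max_left _ _) hnt) (lt_add_one _)⟩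
        have h1 : t⁻¹ < (n:ℝ) + 1 := lt_trans (lt_of_le_of_lt (le_max_right _ _) hnt) (lt_add_one _)
        have hpos : (0:ℝ) < (n:ℝ) + 1 := by positivity
        rw [inv_lt_comm₀ hpos ht0]
        exact h1
      apply le_antisymm
      · exact iSup_le fun m => indicator_le_self _ _ t
      · refine le_trans ?_ (le_iSup _ n)
        rw [indicator_of_mem hn]
    · rw [indicator_of_notMem ht]
      simp only [ENNReal.iSup_eq_zero]
      exact fun n => indicator_of_notMem (fun h => ht (hsub n h)) _
  calc ∫⁻ t in Ioi (0:ℝ), F t ^ q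
      = ∫⁻ t, (Ioi (0:ℝ)).indicator (fun u => F u ^ q) t := by
        rw [lintegral_indicator measurableSet_Ioi]
    _ = ∫⁻ t, ⨆ n, (sn n).indicator (fun u => F u ^ q) t := by
        simp_rw [hind]
    _ = ⨆ n, ∫⁻ t, (sn n).indicator (fun u => F u ^ q) t :=
        lintegral_iSup (fun n => hFqm.indicator measurableSet_Ioo) hmono
    _ = ⨆ n, ∫⁻ t in sn n, F t ^ q := by
        exact iSup_congr fun n => lintegral_indicator measurableSet_Ioo _
    _ ≤ ENNReal.ofReal (1 / p') * A ^ q := iSup_le key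


/-- Let `A` be self-adjoint on a Hilbert space with `σ(A) ⊂ (-∞,0]` and
`T(t) = e^{tA}`, and let `p' > 2`. Then `∫₀^∞ ‖(-A)^{1/p'} T(t) x‖^{p'} dt ≤ (1/p')‖x‖^{p'}`,
i.e. `(-A)^{1/p'}` is an `L^{p'}`-admissible observation operator. By the spectral
theorem, `A` is represented as multiplication by `-f` (`f ≥ 0`) on `L²(Ω,μ)`, so that
`(-A)^{1/p'} T(t)` is multiplication by `f^{1/p'} e^{-t f}`. -/
theorem selfadjoint_fractional_power_admissible_observation
    {Ω : Type*} [MeasurableSpace Ω] (μ : Measure Ω) [SigmaFinite μ]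
    (f : Ω → ℝ) (hf : Measurable f) (hf0 : ∀ ω, 0 ≤ f ω)
    (p' : ℝ) (hp' : 2 < p') (x : Ω → ℂ) (hx : MemLp x 2 μ) :
    ∫⁻ t in Ioi (0:ℝ),
        (eLpNorm (fun ω : Ω => ((f ω) ^ (1 / p') * Real.exp (-t * f ω) : ℝ) • x ω) 2 μ)
          ^ p'
      ≤ ENNReal.ofReal (1 / p') * (eLpNorm x 2 μ) ^ p' := by
  have hp0 : (0:ℝ) < p' := by linarith
  -- replace x by a measurable representative
  set x' : Ω → ℂ := hx.1.mk x with hx'def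
  have hx'm : Measurable x' := hx.1.stronglyMeasurable_mk.measurable
  have hxx' : x =ᵐ[μ] x' := hx.1.ae_eq_mk
  have hnorm : ∀ t : ℝ,
      eLpNorm (fun ω : Ω => ((f ω) ^ (1 / p') * Real.exp (-t * f ω) : ℝ) • x ω) 2 μ
        = eLpNorm (fun ω : Ω => ((f ω) ^ (1 / p') * Real.exp (-t * f ω) : ℝ) • x' ω) 2 μ :=
    fun t => eLpNorm_congr_ae (hxx'.mono fun ω h => by dsimp only; rw [h])
  have hX : eLpNorm x 2 μ = eLpNorm x' 2 μ := eLpNorm_congr_ae hxx'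
  -- rewrite eLpNorms as lintegrals
  have htwo : ((2:ℝ≥0∞)).toReal = (2:ℝ) := by norm_num
  have help : ∀ (g : Ω → ℂ), eLpNorm g 2 μ
      = (∫⁻ ω, ((‖g ω‖₊ : ℝ≥0∞)) ^ (2:ℝ) ∂μ) ^ (1 / (2:ℝ)) := by
    intro g
    rw [eLpNorm_eq_lintegral_rpow_enorm_toReal (by norm_num) (by norm_num), htwo]; rfl
  have hx2 : (∫⁻ ω, (‖x' ω‖₊ : ℝ≥0∞) ^ (2:ℝ) ∂μ) ≠ ∞ := by
    intro htop
    have h2 := hx.2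
    rw [hX, help, htop, ENNReal.top_rpow_of_pos (by norm_num)] at h2
    exact (lt_irrefl _ h2).elim
  have hsmul : ∀ (t : ℝ) (ω : Ω),
      ((‖((f ω) ^ (1 / p') * Real.exp (-t * f ω) : ℝ) • x' ω‖₊ : ℝ≥0∞)) ^ (2:ℝ)
        = ENNReal.ofReal (f ω ^ (1 / p') * Real.exp (-t * f ω)) ^ (2:ℝ)
          * (‖x' ω‖₊ : ℝ≥0∞) ^ (2:ℝ) := by
    intro t ω
    rw [nnnorm_smul, ENNReal.coe_mul,
      (show ((‖(f ω ^ (1 / p') * Real.exp (-t * f ω) : ℝ)‖₊ : ℝ≥0∞)) = ENNReal.ofReal _ from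
        Real.enorm_eq_ofReal (mul_nonneg (Real.rpow_nonneg (hf0 ω) _) (Real.exp_nonneg _))),
      ENNReal.mul_rpow_of_nonneg _ _ (by norm_num : (0:ℝ) ≤ 2)]
  have hmain := aux_mink μ f hf hf0 p' hp' x' hx'm hx2
  calc ∫⁻ t in Ioi (0:ℝ),
        (eLpNorm (fun ω : Ω => ((f ω) ^ (1 / p') * Real.exp (-t * f ω) : ℝ) • x ω) 2 μ) ^ p'
      = ∫⁻ t in Ioi (0:ℝ),
          (∫⁻ ω, ENNReal.ofReal (f ω ^ (1 / p') * Real.exp (-t * f ω)) ^ (2:ℝ)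
              * (‖x' ω‖₊ : ℝ≥0∞) ^ (2:ℝ) ∂μ) ^ (p' / 2) := by
        refine lintegral_congr fun t => ?_
        rw [hnorm t, help]
        rw [← ENNReal.rpow_mul]
        congr 1
        · refine lintegral_congr fun ω => hsmul t ω
        · ring
    _ ≤ ENNReal.ofReal (1 / p') * (∫⁻ ω, (‖x' ω‖₊ : ℝ≥0∞) ^ (2:ℝ) ∂μ) ^ (p' / 2) := hmain
    _ = ENNReal.ofReal (1 / p') * (eLpNorm x 2 μ) ^ p' := by
        rw [hX, help, ← ENNReal.rpow_mul]
        congr 2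
        ring
end

section
/- For every μ > 0, μ ∑_{n=1}^∞ 2n²π²/(μ² + n²π²)² = (1/2)(coth μ − μ csch² μ) = 1/2 + ((2 − 4μ)e^{2μ} − 2)/(2(e^{2μ} − 1)²), and this quantity is at most 1/2. Consequently sup_{μ>0} μ ∑_{n=1}^∞ 2n²π²/(μ²+n²π²)² ≤ 1/2. -/
open Real

open MeasureTheory Set AddCircle intervalIntegral

noncomputable section
local instance : Fact ((0:ℝ) < 2) := ⟨by norm_num⟩

lemma aux_integral (μ : ℝ) (hμ : 0 < μ) (n : ℤ) :
    ∫ x in (0:ℝ)..2, (fourier (-n) (x : AddCircle (2:ℝ)) : ℂ) * Complex.cosh (μ * (x - 1))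
      = 2 * ((μ * Real.sinh μ / (μ^2 + (n:ℝ)^2 * Real.pi^2) : ℝ) : ℂ) := by
  have hc1 : (↑μ - ↑Real.pi * Complex.I * (n:ℂ)) ≠ 0 := by
    intro h
    have := congrArg Complex.re h
    simp [Complex.sub_re, Complex.mul_re, Complex.mul_im] at this
    exact hμ.ne' this
  have hc2 : (-↑μ - ↑Real.pi * Complex.I * (n:ℂ)) ≠ 0 := by
    intro h
    have := congrArg Complex.re h
    simp [Complex.sub_re, Complex.mul_re, Complex.mul_im, Complex.neg_re] at this
    exact hμ.ne' (by linarith)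
  have key : ∀ x : ℝ, (fourier (-n) (x : AddCircle (2:ℝ)) : ℂ) * Complex.cosh (μ * (x - 1))
      = (Complex.exp ((↑μ - ↑Real.pi * Complex.I * n) * x) * Complex.exp (-↑μ)
        + Complex.exp ((-↑μ - ↑Real.pi * Complex.I * n) * x) * Complex.exp ↑μ) / 2 := by
    intro x
    rw [fourier_coe_apply, Complex.cosh, ← mul_div_assoc, mul_add, ← Complex.exp_add,
      ← Complex.exp_add, ← Complex.exp_add, ← Complex.exp_add]
    congr 2
    · push_cast; ring
    · push_cast; ring
  rw [intervalIntegral.integral_congr (g := fun x =>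
      (Complex.exp ((↑μ - ↑Real.pi * Complex.I * n) * x) * Complex.exp (-↑μ)
        + Complex.exp ((-↑μ - ↑Real.pi * Complex.I * n) * x) * Complex.exp ↑μ) / 2)
      (fun x _ => key x)]
  have i1 : IntervalIntegrable (fun x : ℝ => Complex.exp ((↑μ - ↑Real.pi * Complex.I * n) * x)
      * Complex.exp (-↑μ)) volume 0 2 :=
    (((Complex.continuous_exp.comp (continuous_const.mul Complex.continuous_ofReal)).mul
      continuous_const)).intervalIntegrable _ _
  have i2 : IntervalIntegrable (fun x : ℝ => Complex.exp ((-↑μ - ↑Real.pi * Complex.I * n) * x)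
      * Complex.exp ↑μ) volume 0 2 :=
    (((Complex.continuous_exp.comp (continuous_const.mul Complex.continuous_ofReal)).mul
      continuous_const)).intervalIntegrable _ _
  rw [intervalIntegral.integral_div, intervalIntegral.integral_add i1 i2,
    intervalIntegral.integral_mul_const, intervalIntegral.integral_mul_const,
    integral_exp_mul_complex hc1, integral_exp_mul_complex hc2]
  have e1 : Complex.exp ((↑μ - ↑Real.pi * Complex.I * n) * 2)
      = (Real.exp μ : ℂ)^2 := by
    rw [show (↑μ - ↑Real.pi * Complex.I * (n:ℂ)) * 2
        = 2*↑μ + ((-n : ℤ) : ℂ) * (2 * ↑Real.pi * Complex.I) by push_cast; ring,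
      Complex.exp_add, Complex.exp_int_mul_two_pi_mul_I]
    rw [show ((2:ℂ)*↑μ) = ↑μ + ↑μ by ring, Complex.exp_add, ← Complex.ofReal_exp]
    ring
  have e2 : Complex.exp ((-↑μ - ↑Real.pi * Complex.I * n) * 2)
      = ((Real.exp μ : ℂ)^2)⁻¹ := by
    rw [show ((-↑μ:ℂ) - ↑Real.pi * Complex.I * (n:ℂ)) * 2
        = (-↑μ + -↑μ) + ((-n : ℤ) : ℂ) * (2 * ↑Real.pi * Complex.I) by push_cast; ring,
      Complex.exp_add, Complex.exp_int_mul_two_pi_mul_I, Complex.exp_add, Complex.exp_neg,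
      ← Complex.ofReal_exp]
    rw [mul_one]; ring
  simp only [Complex.ofReal_ofNat, Complex.ofReal_zero, mul_zero, Complex.exp_zero]
  rw [e1, e2]
  have hE : (Real.exp μ : ℂ) ≠ 0 := by
    exact_mod_cast Complex.ofReal_ne_zero.mpr (Real.exp_ne_zero μ)
  have hden : ((μ^2 + (n:ℝ)^2 * Real.pi^2 : ℝ) : ℂ) ≠ 0 := by
    refine Complex.ofReal_ne_zero.mpr (ne_of_gt ?_)
    positivity
  rw [Complex.exp_neg, ← Complex.ofReal_exp, Real.sinh_eq, Real.exp_neg]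
  have hq : ((μ:ℂ)^2 + (n:ℂ)^2*(Real.pi:ℂ)^2) ≠ 0 := by
    intro h; apply hden; push_cast; exact_mod_cast h
  push_cast
  field_simp [Complex.exp_ne_zero, hq]
  rw [eq_div_iff (by rw [mul_comm]; exact hq)]
  ring_nf
  simp only [Complex.I_sq]
  ring_nf

lemma nat_ineq (n : ℕ) (μ : ℝ) (hμ : 0 < μ) :
    1 / (μ^2 + (n:ℝ)^2 * Real.pi^2) ≤ (1/μ^2 + 1/2) / ((n:ℝ)+1)^2 := by
  have hπ : (3:ℝ) < Real.pi := Real.pi_gt_three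
  have hD : (0:ℝ) < μ^2 + (n:ℝ)^2 * Real.pi^2 := by positivity
  have hn1 : (0:ℝ) ≤ (n:ℝ) * ((n:ℝ) - 1) := by
    rcases Nat.eq_zero_or_pos n with h | h
    · simp [h]
    · have : (1:ℝ) ≤ n := by exact_mod_cast h
      nlinarith [Nat.cast_nonneg (α := ℝ) n]
  rw [div_le_div_iff₀ hD (by positivity)]
  have h9 : (9:ℝ) < Real.pi^2 := by nlinarith
  have hn0 : (0:ℝ) ≤ (n:ℝ) := Nat.cast_nonneg n
  rw [show (1/μ^2 + 1/2 : ℝ) = (2 + μ^2)/(2*μ^2) by field_simp]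
  rw [div_mul_eq_mul_div, le_div_iff₀ (by positivity)]
  nlinarith [mul_nonneg (mul_nonneg (sq_nonneg μ) hn1) hn0,
    mul_nonneg (sq_nonneg μ) hn1, mul_nonneg (sq_nonneg ((n:ℝ))) (sq_nonneg μ),
    mul_nonneg hn0 (sq_nonneg μ)]

lemma summable_base (μ : ℝ) (hμ : 0 < μ) (c : ℝ) :
    Summable (fun n : ℕ => c / (μ^2 + ((n:ℝ))^2 * Real.pi^2)) := by
  have base : Summable (fun n : ℕ => (1/μ^2 + 1/2) / ((n:ℝ)+1)^2) := by
    have h1 : Summable (fun n : ℕ => 1 / ((n:ℝ))^2) :=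
      Real.summable_one_div_nat_pow.mpr one_lt_two
    have h2 := (summable_nat_add_iff 1).mpr h1
    have h3 : Summable (fun n : ℕ => 1 / ((n:ℝ)+1)^2) := by
      refine h2.congr fun n => ?_
      push_cast; ring_nf
    exact (h3.mul_left (1/μ^2 + 1/2)).congr fun n => by rw [mul_one_div]
  have h1 : Summable (fun n : ℕ => 1 / (μ^2 + ((n:ℝ))^2 * Real.pi^2)) := by
    refine Summable.of_nonneg_of_le (fun n => by positivity)
      (fun n => nat_ineq n μ hμ) base
  simpa [div_eq_mul_inv] using h1.mul_left c

lemma summable_int_base (μ : ℝ) (hμ : 0 < μ) (c : ℝ) :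
    Summable (fun i : ℤ => c / (μ^2 + ((i:ℝ))^2 * Real.pi^2)) := by
  refine Summable.of_nat_of_neg ?_ ?_ <;>
  · refine (summable_base μ hμ c).congr fun n => ?_
    push_cast; ring_nf

def Fmap (μ : ℝ) : C(AddCircle (2:ℝ), ℂ) :=
  ⟨AddCircle.liftIco 2 0 (fun x : ℝ => Complex.cosh (μ * (x - 1))),
   AddCircle.liftIco_zero_continuous
     (by norm_num [Complex.cosh_neg])
     (Complex.continuous_cosh.comp
       ((continuous_const.mul (Complex.continuous_ofReal.sub continuous_const)))).continuousOn⟩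

lemma Fmap_coe (μ : ℝ) {x : ℝ} (hx : x ∈ Set.Ico (0:ℝ) 2) :
    Fmap μ (x : AddCircle (2:ℝ)) = Complex.cosh (μ * (x - 1)) := by
  have h : x ∈ Set.Ico (0:ℝ) (0 + 2) := by simpa using hx
  show AddCircle.liftIco 2 0 (fun x : ℝ => Complex.cosh (μ * (x - 1))) (x : AddCircle (2:ℝ)) = _
  exact AddCircle.liftIco_coe_apply h

lemma fourierCoeff_Fmap (μ : ℝ) (hμ : 0 < μ) (n : ℤ) :
    fourierCoeff (⇑(Fmap μ)) n = ((μ * Real.sinh μ / (μ^2 + (n:ℝ)^2 * Real.pi^2) : ℝ) : ℂ) := by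
  rw [fourierCoeff_eq_intervalIntegral _ n 0]
  have hae : ∀ᵐ x : ℝ, x ≠ 2 := by
    rw [MeasureTheory.ae_iff]
    simp [not_not, Set.setOf_eq_eq_singleton, measure_singleton]
  have : (∫ x in (0:ℝ)..0+2, (fourier (-n) (x : AddCircle (2:ℝ)) : ℂ) • Fmap μ (x : AddCircle (2:ℝ)))
      = ∫ x in (0:ℝ)..2, (fourier (-n) (x : AddCircle (2:ℝ)) : ℂ) * Complex.cosh (μ * (x - 1)) := by
    norm_num
    refine intervalIntegral.integral_congr_ae ?_
    filter_upwards [hae] with x hx2 hx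
    rw [Set.uIoc_of_le (by norm_num : (0:ℝ) ≤ 2)] at hx
    rw [Fmap_coe μ ⟨hx.1.le, lt_of_le_of_ne hx.2 hx2⟩]
  rw [this, aux_integral μ hμ n, Complex.real_smul]
  push_cast
  ring

lemma summable_fc (μ : ℝ) (hμ : 0 < μ) : Summable (fourierCoeff (⇑(Fmap μ))) := by
  rw [show fourierCoeff (⇑(Fmap μ))
      = fun i : ℤ => ((μ * Real.sinh μ / (μ^2 + (i:ℝ)^2 * Real.pi^2) : ℝ) : ℂ) from
    funext (fourierCoeff_Fmap μ hμ)]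
  exact Complex.summable_ofReal.mpr (summable_int_base μ hμ _)

lemma H1 (μ : ℝ) (hμ : 0 < μ) :
    HasSum (fun i : ℤ => μ * Real.sinh μ / (μ^2 + (i:ℝ)^2 * Real.pi^2)) (Real.cosh μ) := by
  have h := has_pointwise_sum_fourier_series_of_summable (summable_fc μ hμ) (0 : AddCircle (2:ℝ))
  have hF0 : Fmap μ 0 = ((Real.cosh μ : ℝ) : ℂ) := by
    have h0 : ((0:ℝ) : AddCircle (2:ℝ)) = 0 := by norm_num
    rw [← h0, Fmap_coe μ (by norm_num)]
    rw [show ((μ:ℂ) * ((0:ℝ) - 1)) = -μ by push_cast; ring, Complex.cosh_neg,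
      Complex.ofReal_cosh]
  rw [hF0] at h
  simp_rw [fourierCoeff_Fmap μ hμ, fourier_eval_zero, smul_eq_mul, mul_one] at h
  exact Complex.hasSum_ofReal.mp h

lemma integral_cosh_sq (μ : ℝ) (hμ : 0 < μ) :
    ∫ x in (0:ℝ)..2, (Real.cosh (μ * (x - 1)))^2 = 1 + Real.sinh (2*μ)/(2*μ) := by
  have hder : ∀ x ∈ Set.uIcc (0:ℝ) 2,
      HasDerivAt (fun y : ℝ => y/2 + Real.sinh (2*μ*(y-1))/(4*μ))
      ((Real.cosh (μ * (x-1)))^2) x := by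
    intro x _
    have h1 : HasDerivAt (fun y : ℝ => 2*μ*(y-1)) (2*μ) x := by
      simpa using ((hasDerivAt_id x).sub_const 1).const_mul (2*μ)
    have h2 := (Real.hasDerivAt_sinh (2*μ*(x-1))).comp x h1
    have h3 := ((hasDerivAt_id x).div_const 2).add (h2.div_const (4*μ))
    refine h3.congr_deriv ?_
    have hc : Real.cosh (2*μ*(x-1)) = (Real.cosh (μ*(x-1)))^2 + (Real.sinh (μ*(x-1)))^2 := by
      rw [show 2*μ*(x-1) = 2*(μ*(x-1)) by ring, Real.cosh_two_mul]
    have hs : (Real.cosh (μ*(x-1)))^2 - (Real.sinh (μ*(x-1)))^2 = 1 := Real.cosh_sq_sub_sinh_sq _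
    field_simp
    nlinarith [hc, hs]
  rw [intervalIntegral.integral_eq_sub_of_hasDerivAt hder
    (Continuous.intervalIntegrable (by fun_prop) _ _)]
  norm_num [Real.sinh_neg]
  field_simp
  ring

lemma H2 (μ : ℝ) (hμ : 0 < μ) :
    ∑' i : ℤ, (μ * Real.sinh μ / (μ^2 + (i:ℝ)^2 * Real.pi^2))^2
      = (1 + Real.sinh (2*μ)/(2*μ)) / 2 := by
  have hP := tsum_sq_fourierCoeff (ContinuousMap.toLp (E := ℂ) 2 haarAddCircle ℂ (Fmap μ))
  have hL : ∀ i : ℤ,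
      ‖fourierCoeff (↑(ContinuousMap.toLp (E := ℂ) 2 haarAddCircle ℂ (Fmap μ)) :
          AddCircle (2:ℝ) → ℂ) i‖^2
        = (μ * Real.sinh μ / (μ^2 + (i:ℝ)^2 * Real.pi^2))^2 := by
    intro i
    rw [fourierCoeff_toLp, fourierCoeff_Fmap μ hμ, Complex.norm_real, Real.norm_eq_abs, sq_abs]
  simp_rw [hL] at hP
  rw [hP]
  have hae2 : (↑(ContinuousMap.toLp (E := ℂ) 2 haarAddCircle ℂ (Fmap μ)) :
      AddCircle (2:ℝ) → ℂ) =ᵐ[haarAddCircle] ⇑(Fmap μ) :=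
    ContinuousMap.coeFn_toLp (p := 2) (𝕜 := ℂ) haarAddCircle (Fmap μ)
  rw [MeasureTheory.integral_congr_ae (hae2.mono fun x hx => by rw [hx])]
  have hvol : ∫ x in (0:ℝ)..0+2, ‖Fmap μ (x : AddCircle (2:ℝ))‖^2
      = ∫ z : AddCircle (2:ℝ), ‖Fmap μ z‖^2 :=
    AddCircle.intervalIntegral_preimage 2 0 (fun z => ‖Fmap μ z‖^2)
  have hsmul : ∫ z : AddCircle (2:ℝ), ‖Fmap μ z‖^2
      = 2 * ∫ z : AddCircle (2:ℝ), ‖Fmap μ z‖^2 ∂haarAddCircle := by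
    rw [show (volume : Measure (AddCircle (2:ℝ)))
        = ENNReal.ofReal 2 • haarAddCircle from volume_eq_smul_haarAddCircle,
      MeasureTheory.integral_smul_measure, ENNReal.toReal_ofReal (by norm_num : (0:ℝ) ≤ 2),
      smul_eq_mul]
  have hint : ∫ x in (0:ℝ)..0+2, ‖Fmap μ (x : AddCircle (2:ℝ))‖^2
      = 1 + Real.sinh (2*μ)/(2*μ) := by
    have hae : ∀ᵐ x : ℝ, x ≠ 2 := by
      rw [MeasureTheory.ae_iff]
      simp [not_not, Set.setOf_eq_eq_singleton, measure_singleton]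
    rw [show ((0:ℝ)+2) = 2 by norm_num, ← integral_cosh_sq μ hμ]
    refine intervalIntegral.integral_congr_ae ?_
    filter_upwards [hae] with x hx2 hx
    rw [Set.uIoc_of_le (by norm_num : (0:ℝ) ≤ 2)] at hx
    rw [Fmap_coe μ ⟨hx.1.le, lt_of_le_of_ne hx.2 hx2⟩,
      show ((μ:ℂ) * ((x:ℂ) - 1)) = ((μ * (x - 1) : ℝ) : ℂ) by push_cast; ring,
      ← Complex.ofReal_cosh, Complex.norm_real, Real.norm_eq_abs, sq_abs]
  have hcomb := hvol.trans hsmul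
  rw [hint] at hcomb
  linarith [hcomb]

lemma hs_congr {f g : ℕ → ℝ} {a : ℝ} (h : ∀ n, f n = g n) (hf : HasSum f a) :
    HasSum g a := (funext h : f = g) ▸ hf

lemma int_to_nat_sum (w : ℤ → ℝ) (S : ℝ) (hw : HasSum w S)
    (heven : ∀ n : ℕ, w (-((n:ℤ)+1)) = w ((n:ℤ)+1))
    (hsum : Summable (fun n : ℕ => w ((n:ℤ)+1))) :
    HasSum (fun n : ℕ => w ((n:ℤ)+1)) ((S - w 0)/2) := by
  have h1 : HasSum (fun n : ℕ => w n + w (-((n:ℤ)+1))) S := hw.nat_add_neg_add_one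
  have h1' : HasSum (fun n : ℕ => w n + w ((n:ℤ)+1)) S :=
    hs_congr (fun n => by rw [heven n]) h1
  obtain ⟨s, hs⟩ := hsum
  have h2 : HasSum (fun n : ℕ => w n) (S - s) :=
    hs_congr (fun n => by ring) (h1'.sub hs)
  have h4 : HasSum (fun n : ℕ => w ((n + 1 : ℕ))) s :=
    hs_congr (fun n => by norm_num) hs
  have h5 := (hasSum_nat_add_iff (f := fun n : ℕ => w n) 1).mp h4
  have h6 : S - s = s + w 0 := h2.unique (by simpa using h5)
  have h7 : s = (S - w 0)/2 := by linarith
  exact h7 ▸ hs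

lemma main_hasSum (μ : ℝ) (hμ : 0 < μ) :
    HasSum (fun n : ℕ => 2 * ((n:ℝ)+1) ^ 2 * Real.pi ^ 2
        / (μ ^ 2 + ((n:ℝ)+1) ^ 2 * Real.pi ^ 2) ^ 2)
      ((1/(2*μ)) * (Real.cosh μ / Real.sinh μ - μ * (1 / Real.sinh μ) ^ 2)) := by
  have hS : 0 < Real.sinh μ := by positivity
  have ha : (0:ℝ) < μ * Real.sinh μ := by positivity
  set a := μ * Real.sinh μ with ha_def
  set u : ℤ → ℝ := fun i => a / (μ^2 + (i:ℝ)^2 * Real.pi^2) with hu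
  have hD : ∀ x : ℝ, (0:ℝ) < μ^2 + x^2 * Real.pi^2 := fun x => by positivity
  -- first series
  have hw1 := H1 μ hμ
  have heven : ∀ n : ℕ, u (-((n:ℤ)+1)) = u ((n:ℤ)+1) := by
    intro n; simp only [hu]; push_cast
    rw [show (-((n:ℝ) + 1))^2 = ((n:ℝ)+1)^2 by ring]
  have hsum1 : Summable (fun n : ℕ => u ((n:ℤ)+1)) := by
    have := (summable_nat_add_iff 1).mpr (summable_base μ hμ a)
    refine this.congr fun n => ?_
    simp only [hu]; push_cast; ring_nf
  have hb := int_to_nat_sum u (Real.cosh μ) hw1 heven hsum1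
  -- second series
  have hsq_int : Summable (fun i : ℤ => (u i)^2) := by
    refine Summable.of_nonneg_of_le (fun i => sq_nonneg _) (fun i => ?_)
      (hw1.summable.mul_left (a/μ^2))
    have h1 : u i ≤ a/μ^2 := by
      rw [hu]
      refine div_le_div_of_nonneg_left ha.le (by positivity) ?_
      nlinarith [sq_nonneg ((i:ℝ)), Real.pi_pos.le, sq_nonneg ((i:ℝ)*Real.pi)]
    have h2 : (0:ℝ) ≤ u i := le_of_lt (by rw [hu]; positivity)
    calc (u i)^2 = u i * u i := sq (u i) ▸ by ring
    _ ≤ (a/μ^2) * u i := by nlinarith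
  have hw2 : HasSum (fun i : ℤ => (u i)^2) ((1 + Real.sinh (2*μ)/(2*μ)) / 2) := by
    have := hsq_int.hasSum
    rwa [show ∑' i : ℤ, (u i)^2 = (1 + Real.sinh (2*μ)/(2*μ)) / 2 from H2 μ hμ] at this
  have heven2 : ∀ n : ℕ, (u (-((n:ℤ)+1)))^2 = (u ((n:ℤ)+1))^2 := fun n => by rw [heven n]
  have hsum2 : Summable (fun n : ℕ => (u ((n:ℤ)+1))^2) := by
    have h4 : Summable (fun n : ℕ => (u ((n:ℤ)+1))) := hsum1
    refine Summable.of_nonneg_of_le (fun n => sq_nonneg _) (fun n => ?_)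
      (h4.mul_left (a/μ^2))
    have h1 : u ((n:ℤ)+1) ≤ a/μ^2 := by
      rw [hu]
      refine div_le_div_of_nonneg_left ha.le (by positivity) ?_
      nlinarith [sq_nonneg (((n:ℤ)+1:ℝ)), sq_nonneg ((((n:ℤ)+1:ℝ))*Real.pi)]
    have h2 : (0:ℝ) ≤ u ((n:ℤ)+1) := le_of_lt (by rw [hu]; positivity)
    nlinarith
  have hq := int_to_nat_sum (fun i => (u i)^2) _ hw2 heven2 hsum2
  -- combine
  have hu0 : u 0 = a/μ^2 := by simp [hu]
  have hcomb := (hb.mul_left (2/a)).sub (hq.mul_left (2*μ^2/a^2))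
  have hfun : ∀ n : ℕ, (2/a) * u ((n:ℤ)+1) - (2*μ^2/a^2) * (u ((n:ℤ)+1))^2
      = 2 * ((n:ℝ)+1) ^ 2 * Real.pi ^ 2 / (μ ^ 2 + ((n:ℝ)+1) ^ 2 * Real.pi ^ 2) ^ 2 := by
    intro n
    have hDn : (0:ℝ) < μ^2 + ((n:ℝ)+1)^2 * Real.pi^2 := hD _
    rw [hu]
    push_cast
    field_simp
    ring
  have hcomb' : HasSum (fun n : ℕ => 2 * ((n:ℝ)+1) ^ 2 * Real.pi ^ 2
        / (μ ^ 2 + ((n:ℝ)+1) ^ 2 * Real.pi ^ 2) ^ 2)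
      ((2/a) * ((Real.cosh μ - u 0)/2)
        - (2*μ^2/a^2) * (((1 + Real.sinh (2*μ)/(2*μ)) / 2 - (u 0)^2)/2)) := by
    exact hs_congr hfun hcomb
  have hval : (2/a) * ((Real.cosh μ - u 0)/2)
        - (2*μ^2/a^2) * (((1 + Real.sinh (2*μ)/(2*μ)) / 2 - (u 0)^2)/2)
      = (1/(2*μ)) * (Real.cosh μ / Real.sinh μ - μ * (1 / Real.sinh μ) ^ 2) := by
    rw [hu0, ha_def, Real.sinh_two_mul]
    field_simp
    ring
  rwa [hval] at hcomb'

/-- For every `μ > 0`,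
`μ ∑_{n≥1} 2n²π²/(μ²+n²π²)² = (1/2)(coth μ − μ csch² μ)
 = 1/2 + ((2−4μ)e^{2μ}−2)/(2(e^{2μ}−1)²) ≤ 1/2`,
hence the supremum over `μ > 0` is at most `1/2`. -/
theorem resolvent_sum_closed_form (μ : ℝ) (hμ : 0 < μ) :
    (μ * ∑' n : ℕ, 2 * ((n:ℝ)+1) ^ 2 * π ^ 2 / (μ ^ 2 + ((n:ℝ)+1) ^ 2 * π ^ 2) ^ 2
        = (1/2) * (Real.cosh μ / Real.sinh μ - μ * (1 / Real.sinh μ) ^ 2)) ∧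
    (μ * ∑' n : ℕ, 2 * ((n:ℝ)+1) ^ 2 * π ^ 2 / (μ ^ 2 + ((n:ℝ)+1) ^ 2 * π ^ 2) ^ 2
        = 1/2 + ((2 - 4 * μ) * Real.exp (2 * μ) - 2) /
            (2 * (Real.exp (2 * μ) - 1) ^ 2)) ∧
    μ * ∑' n : ℕ, 2 * ((n:ℝ)+1) ^ 2 * π ^ 2 / (μ ^ 2 + ((n:ℝ)+1) ^ 2 * π ^ 2) ^ 2
        ≤ 1/2 := by
  have hS : 0 < Real.sinh μ := by positivity
  have htsum : ∑' n : ℕ, 2 * ((n:ℝ)+1) ^ 2 * π ^ 2 / (μ ^ 2 + ((n:ℝ)+1) ^ 2 * π ^ 2) ^ 2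
      = (1/(2*μ)) * (Real.cosh μ / Real.sinh μ - μ * (1 / Real.sinh μ) ^ 2) :=
    (main_hasSum μ hμ).tsum_eq
  rw [htsum]
  have hval1 : μ * ((1/(2*μ)) * (Real.cosh μ / Real.sinh μ - μ * (1/Real.sinh μ)^2))
      = (1/2) * (Real.cosh μ / Real.sinh μ - μ * (1/Real.sinh μ)^2) := by
    field_simp
  have he : 1 < Real.exp μ := by
    rw [← Real.exp_zero]; exact Real.exp_lt_exp.mpr hμ
  have hE1 : 1 < Real.exp (2*μ) := by
    rw [← Real.exp_zero]; exact Real.exp_lt_exp.mpr (by linarith)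
  have hval2 : (1/2) * (Real.cosh μ / Real.sinh μ - μ * (1/Real.sinh μ)^2)
      = 1/2 + ((2 - 4 * μ) * Real.exp (2 * μ) - 2) /
          (2 * (Real.exp (2 * μ) - 1) ^ 2) := by
    have hp := Real.exp_pos μ
    have h2 : Real.exp (2*μ) = Real.exp μ * Real.exp μ := by
      rw [show (2*μ) = μ + μ by ring, Real.exp_add]
    have h3 : Real.exp μ * Real.exp μ - 1 ≠ 0 := by
      rw [← h2]; exact ne_of_gt (by linarith)
    have h4 : (Real.exp μ)⁻¹ < 1 := inv_lt_one_of_one_lt₀ he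
    have h5 : Real.exp μ - (Real.exp μ)⁻¹ ≠ 0 := ne_of_gt (by linarith)
    rw [Real.cosh_eq, Real.sinh_eq, Real.exp_neg, h2]
    have h3' : Real.exp μ ^ 2 - 1 ≠ 0 := by rw [sq]; exact h3
    field_simp
    ring
  have hX : (2 - 4*μ) * Real.exp (2*μ) - 2 ≤ 0 := by
    have h := Real.add_one_le_exp (-(2*μ))
    have hE := Real.exp_pos (2*μ)
    have hmul : Real.exp (-(2*μ)) * Real.exp (2*μ) = 1 := by
      rw [← Real.exp_add]; norm_num
    nlinarith
  have hden : (0:ℝ) < 2 * (Real.exp (2*μ) - 1)^2 := by nlinarith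
  have hle : ((2 - 4 * μ) * Real.exp (2 * μ) - 2) /
      (2 * (Real.exp (2 * μ) - 1) ^ 2) ≤ 0 :=
    div_nonpos_of_nonpos_of_nonneg hX hden.le
  refine ⟨hval1, hval1.trans hval2, ?_⟩
  rw [hval1, hval2]
  linarith

end
end

section
/- For the diagonal operator A on ℓ² with Ae_n = −n²π² e_n and the control element b with b_n = (−1)^n √2 nπ, the resolvent condition sup_{Re λ > 0} (Re λ)^{1/4} ‖R(λ,A)b‖_{ℓ²} < ∞ holds. In particular, since b is not L⁴-admissible for A, the 4-Weiss property fails for A even though A is self-adjoint and negative definite. -/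
/-!
Each coordinate of `R(λ, A) b` satisfies `‖b_n‖² / |λ + n²π²|² ≤ 2 / (Re λ + n²π²)`, and comparing
`∑ 1 / (r + n²π²)` with `∫₀^∞ dx / (r + π²x²) = 1 / (2√r)` (telescoping `arctan`) gives
`‖R(λ, A) b‖² ≤ (Re λ)^(-1/2)`, so the resolvent condition holds with constant `1`.
-/

open Real Finset

lemma div_one_add_sq_le_arctan_sub_arctan {a b : ℝ} (ha : 0 ≤ a) (hab : a ≤ b) :
    (b - a) / (1 + b ^ 2) ≤ arctan b - arctan a := by
  have hle : ∫ _ in a..b, 1 / (1 + b ^ 2) ≤ ∫ x in a..b, 1 / (1 + x ^ 2) := by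
    refine intervalIntegral.integral_mono_on hab intervalIntegrable_const
      intervalIntegral.intervalIntegrable_one_div_one_add_sq fun x hx => ?_
    have : x ^ 2 ≤ b ^ 2 := pow_le_pow_left₀ (ha.trans hx.1) hx.2 2
    gcongr
  rw [integral_one_div_one_add_sq, intervalIntegral.integral_const, smul_eq_mul] at hle
  simpa only [mul_one_div] using hle

lemma sum_range_one_div_add_sq_mul_sq_le {r c : ℝ} (hr : 0 < r) (hc : 0 < c) (N : ℕ) :
    ∑ n ∈ range N, 1 / (r + ((n : ℝ) + 1) ^ 2 * c ^ 2) ≤ π / (2 * √r * c) := by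
  set s := √r
  have hs : 0 < s := sqrt_pos.mpr hr
  have hs2 : s ^ 2 = r := sq_sqrt hr.le
  have hterm : ∀ n : ℕ, 1 / (r + ((n : ℝ) + 1) ^ 2 * c ^ 2) ≤
      (arctan (((n : ℝ) + 1) * c / s) - arctan (n * c / s)) / (s * c) := by
    intro n
    have key := div_one_add_sq_le_arctan_sub_arctan (a := n * c / s) (b := (n + 1) * c / s)
      (by positivity) (by gcongr; linarith)
    have hid : (((n : ℝ) + 1) * c / s - n * c / s) / (1 + (((n : ℝ) + 1) * c / s) ^ 2) =
        s * c * (1 / (r + ((n : ℝ) + 1) ^ 2 * c ^ 2)) := by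
      rw [← hs2]
      field_simp
      ring
    rw [le_div_iff₀ (by positivity), mul_comm, ← hid]
    exact key
  calc ∑ n ∈ range N, 1 / (r + ((n : ℝ) + 1) ^ 2 * c ^ 2)
      ≤ ∑ n ∈ range N, (arctan (((n : ℝ) + 1) * c / s) - arctan (n * c / s)) / (s * c) :=
        sum_le_sum fun n _ => hterm n
    _ = arctan (N * c / s) / (s * c) := by
        rw [← sum_div]
        simpa using congrArg (· / (s * c)) (sum_range_sub (fun n : ℕ => arctan (n * c / s)) N)
    _ ≤ π / 2 / (s * c) := by gcongr; exact (arctan_lt_pi_div_two _).le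
    _ = π / (2 * s * c) := by ring

lemma div_norm_add_ofReal_sq_le {lam : ℂ} (hlam : 0 ≤ lam.re) {a : ℝ} (ha : 0 < a) :
    a / ‖lam + (a : ℂ)‖ ^ 2 ≤ 1 / (lam.re + a) := by
  have hpos : 0 < lam.re + a := by linarith
  have hnorm : lam.re + a ≤ ‖lam + (a : ℂ)‖ := by
    simpa using Complex.re_le_norm (lam + (a : ℂ))
  calc a / ‖lam + (a : ℂ)‖ ^ 2 ≤ a / (lam.re + a) ^ 2 := by gcongr
    _ ≤ (lam.re + a) / (lam.re + a) ^ 2 := by gcongr; linarith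
    _ = 1 / (lam.re + a) := by field_simp

lemma norm_resolvent_coord_sq_le {lam : ℂ} (hlam : 0 ≤ lam.re) (n : ℕ) :
    ‖((-1 : ℂ) ^ (n + 1) * (√2 * ((n : ℝ) + 1) * π : ℝ)) /
        (lam + ((((n : ℝ) + 1) ^ 2 * π ^ 2 : ℝ) : ℂ))‖ ^ 2 ≤
      2 * (1 / (lam.re + ((n : ℝ) + 1) ^ 2 * π ^ 2)) := by
  have hb : ‖(-1 : ℂ) ^ (n + 1) * (√2 * ((n : ℝ) + 1) * π : ℝ)‖ ^ 2 =
      2 * (((n : ℝ) + 1) ^ 2 * π ^ 2) := by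
    rw [norm_mul, norm_pow, norm_neg, norm_one, one_pow, one_mul, Complex.norm_real,
      Real.norm_eq_abs, sq_abs, mul_pow, mul_pow, sq_sqrt zero_le_two]
    ring
  rw [norm_div, div_pow, hb, mul_div_assoc]
  exact mul_le_mul_of_nonneg_left (div_norm_add_ofReal_sq_le hlam (by positivity)) zero_le_two

lemma rpow_one_div_four_mul_rpow_one_div_two {r S : ℝ} (hr : 0 ≤ r) (hS : 0 ≤ S) :
    r ^ ((1 : ℝ) / 4) * S ^ ((1 : ℝ) / 2) = (√r * S) ^ ((1 : ℝ) / 2) := by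
  rw [mul_rpow (sqrt_nonneg r) hS, sqrt_eq_rpow, ← rpow_mul hr]
  norm_num

/-- For the diagonal operator `A e_n = -n²π² e_n` on `ℓ²` and the control
element `b_n = (-1)^n √2 n π`, the `4`-Weiss resolvent condition
`sup_{Re λ>0} (Re λ)^{1/4} ‖R(λ,A)b‖_{ℓ²} < ∞` holds, where
`(R(λ,A)b)_n = (-1)^n √2 n π/(λ + n²π²)`. (Since `b` is not `L⁴`-admissible, the
`4`-Weiss property fails for this self-adjoint negative definite generator.) -/
theorem resolvent_condition_dirichlet_heat :
    ∃ M : ℝ, ∀ lam : ℂ, 0 < lam.re →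
      (lam.re) ^ ((1:ℝ)/4) *
        (∑' n : ℕ, ‖((-1:ℂ) ^ ((n:ℕ)+1) * (Real.sqrt 2 * ((n:ℝ)+1) * π : ℝ)) /
            (lam + ((((n:ℝ)+1) ^ 2 * π ^ 2 : ℝ) : ℂ))‖ ^ 2) ^ ((1:ℝ)/2)
        ≤ M := by
  refine ⟨1, fun lam hlam => ?_⟩
  have hs : 0 < √lam.re := sqrt_pos.mpr hlam
  have hsum : ∑' n : ℕ, ‖((-1:ℂ) ^ ((n:ℕ)+1) * (Real.sqrt 2 * ((n:ℝ)+1) * π : ℝ)) /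
      (lam + ((((n:ℝ)+1) ^ 2 * π ^ 2 : ℝ) : ℂ))‖ ^ 2 ≤ 1 / √lam.re := by
    refine tsum_le_of_sum_range_le (fun _ => by positivity) fun N => ?_
    calc _ ≤ ∑ n ∈ range N, 2 * (1 / (lam.re + ((n : ℝ) + 1) ^ 2 * π ^ 2)) :=
          sum_le_sum fun n _ => norm_resolvent_coord_sq_le hlam.le n
      _ ≤ 2 * (π / (2 * √lam.re * π)) := by
          rw [← mul_sum]
          gcongr
          exact sum_range_one_div_add_sq_mul_sq_le hlam pi_pos N
      _ = 1 / √lam.re := by field_simp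
  rw [rpow_one_div_four_mul_rpow_one_div_two hlam.le (tsum_nonneg fun _ => by positivity)]
  refine rpow_le_one (by positivity) ?_ (by norm_num)
  calc √lam.re * _ ≤ √lam.re * (1 / √lam.re) := by gcongr
    _ = 1 := by field_simp
end
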